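/- arXiv:2510.12496 — 4 statements merged into one kernel-verified Lean document; each statement's English description precedes it below -/
import Mathlib

section
/- Let N ≥ 4 be an integer, ε ∈ {1, −1}, r an integer with 0 ≤ r ≤ 2, and a₀, …, a_{N−1} integers with a₀ = a₁ = r and |a_m| ≤ r for all m. If Σ_{m=0}^{N−1} (−1)^m 2^{N−1−m} a_m = 2^N − (−1)^N ε · 2, then r = 2, a₂ = 2, and a₃ = −2. -/
private lemma geo_sum_two (n : ℕ) : ∑ i ∈ Finset.range n, (2:ℤ)^i = 2^n - 1 := by
  induction n with
  | zero => simp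
  | succ n ih => rw [Finset.sum_range_succ, ih]; ring

/-- If `N ≥ 4`, `ε = ±1`, `0 ≤ r ≤ 2`, `a 0 = a 1 = r`, `|a m| ≤ r` and
`Σ_{m=0}^{N−1} (−1)^m 2^{N−1−m} a m = 2^N − (−1)^N ε · 2`, then `r = 2`, `a 2 = 2`
and `a 3 = −2`. -/
theorem alternating_sum_eq_forces (N : ℕ) (hN : 4 ≤ N) (ε : ℤ) (hε : ε = 1 ∨ ε = -1)
    (r : ℤ) (hr0 : 0 ≤ r) (hr2 : r ≤ 2)
    (a : ℕ → ℤ) (ha0 : a 0 = r) (ha1 : a 1 = r) (ha : ∀ m, |a m| ≤ r)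
    (hsum : ∑ m ∈ Finset.range N, (-1 : ℤ) ^ m * 2 ^ (N - 1 - m) * a m
      = 2 ^ N - (-1 : ℤ) ^ N * ε * 2) :
    r = 2 ∧ a 2 = 2 ∧ a 3 = -2 := by
  set f : ℕ → ℤ := fun m => (-1 : ℤ) ^ m * 2 ^ (N - 1 - m) * a m with hf
  set P : ℤ := 2 ^ (N - 2) with hPdef
  have hP : (4:ℤ) ≤ P := by
    calc (4:ℤ) = 2 ^ 2 := by norm_num
    _ ≤ 2 ^ (N-2) := pow_le_pow_right₀ (by norm_num) (by omega)
  -- split the sum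
  have hsplit : ∑ m ∈ Finset.range N, f m = f 0 + f 1 + ∑ m ∈ Finset.Ico 2 N, f m := by
    rw [← Finset.sum_range_add_sum_Ico f (show 2 ≤ N by omega)]
    rw [Finset.sum_range_succ, Finset.sum_range_one]
  set T : ℤ := ∑ m ∈ Finset.Ico 2 N, f m with hT
  -- geometric sum
  have hgeo : ∑ m ∈ Finset.Ico 2 N, (2:ℤ)^(N-1-m) = P - 1 := by
    rw [Finset.sum_Ico_eq_sum_range]
    have h1 : ∀ i ∈ Finset.range (N-2), (2:ℤ)^(N-1-(2+i)) = (2:ℤ)^((N-2) - 1 - i) := by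
      intro i hi; congr 1; omega
    rw [Finset.sum_congr rfl h1, Finset.sum_range_reflect (fun i => (2:ℤ)^i), geo_sum_two]
  -- per-term bound
  have hb : ∀ m ∈ Finset.Ico 2 N, f m ≤ 2^(N-1-m) * r := by
    intro m _
    have h1 : f m ≤ |f m| := le_abs_self _
    have h2 : |f m| = 2^(N-1-m) * |a m| := by
      rw [hf]
      rw [abs_mul, abs_mul, abs_pow, abs_pow, abs_neg, abs_one, one_pow, one_mul]
      norm_num
    have h3 : 2^(N-1-m) * |a m| ≤ 2^(N-1-m) * r :=
      mul_le_mul_of_nonneg_left (ha m) (by positivity)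
    linarith
  have hTb : T ≤ (P - 1) * r := by
    calc T ≤ ∑ m ∈ Finset.Ico 2 N, 2^(N-1-m) * r := Finset.sum_le_sum hb
    _ = (∑ m ∈ Finset.Ico 2 N, (2:ℤ)^(N-1-m)) * r := by rw [Finset.sum_mul]
    _ = (P - 1) * r := by rw [hgeo]
  -- compute f 0, f 1 and the equation
  have hf0 : f 0 = 2 * P * r := by
    have : N - 1 - 0 = (N - 2) + 1 := by omega
    simp only [hf, this, pow_succ, pow_zero, one_mul, ha0, hPdef]; ring
  have hf1 : f 1 = -(P * r) := by
    have : N - 1 - 1 = N - 2 := by omega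
    simp only [hf, this, pow_one, ha1, hPdef]; ring
  have h2N : (2:ℤ)^N = 4 * P := by
    have : N = (N - 2) + 2 := by omega
    rw [this, pow_add, hPdef]; ring
  set c : ℤ := (-1:ℤ)^N * ε with hc
  have hcval : c = 1 ∨ c = -1 := by
    rcases neg_one_pow_eq_or ℤ N with h | h <;> rcases hε with rfl | rfl <;>
      simp [hc, h]
  have heq : P * r + T = 4 * P - 2 * c := by
    have := hsum
    rw [show (∑ m ∈ Finset.range N, (-1 : ℤ) ^ m * 2 ^ (N - 1 - m) * a m) =
        ∑ m ∈ Finset.range N, f m from rfl, hsplit, hf0, hf1, h2N] at this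
    linarith
  -- c must be 1
  have hc1 : c = 1 := by
    rcases hcval with h | h
    · exact h
    · exfalso
      rw [h] at heq
      nlinarith [hTb, hP, hr2]
  rw [hc1] at heq
  -- r must be 2
  have hr : r = 2 := by
    nlinarith [hTb, hP, hr2]
  subst hr
  refine ⟨rfl, ?_, ?_⟩ <;>
  · -- equality extraction
    have hTeq : T = 2 * P - 2 := by linarith
    have hzero : ∑ m ∈ Finset.Ico 2 N, (2^(N-1-m) * 2 - f m) = 0 := by
      rw [Finset.sum_sub_distrib, ← Finset.sum_mul, hgeo, ← hT, hTeq]; ring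
    have hnn : ∀ m ∈ Finset.Ico 2 N, (0:ℤ) ≤ 2^(N-1-m) * 2 - f m := by
      intro m hm; linarith [hb m hm]
    have hterm : ∀ m ∈ Finset.Ico 2 N, 2^(N-1-m) * 2 - f m = 0 :=
      (Finset.sum_eq_zero_iff_of_nonneg hnn).mp hzero
    first
    | · -- a 2 = 2
        have h2 : (2:ℕ) ∈ Finset.Ico 2 N := by simp; omega
        have := hterm 2 h2
        have hE : N - 1 - 2 = N - 3 := by omega
        rw [hf] at this
        simp only [hE] at this
        have : (2:ℤ)^(N-3) * a 2 = 2^(N-3) * 2 := by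
          have h4 : ((-1:ℤ))^2 = 1 := by norm_num
          rw [h4, one_mul] at this; linarith
        exact mul_left_cancel₀ (pow_ne_zero _ two_ne_zero) this
    | · -- a 3 = -2
        have h3 : (3:ℕ) ∈ Finset.Ico 2 N := by simp; omega
        have := hterm 3 h3
        have hE : N - 1 - 3 = N - 4 := by omega
        rw [hf] at this
        simp only [hE] at this
        have h5 : (2:ℤ)^(N-4) * (-(a 3)) = 2^(N-4) * 2 := by
          have h4 : ((-1:ℤ))^3 = -1 := by norm_num
          rw [h4] at this; linarith
        have := mul_left_cancel₀ (pow_ne_zero _ (two_ne_zero (α := ℤ))) h5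
        linarith
end

section
/- Let a₁, a₂, a₃, a₄ be real numbers such that a₁, a₂, a₃, a₄, −a₁, −a₂, −a₃, −a₄ are pairwise distinct and no three distinct numbers among these eight form a three-term arithmetic progression. Suppose that for every two-element subset {i, j} of {1,2,3,4}, with {s, t} denoting its complement, there is a sign ε_{ij} ∈ {1, −1} with aᵢ + aⱼ = ε_{ij}(aₛ + aₜ). Then all ε_{ij} = −1, and consequently a₁ + a₂ + a₃ + a₄ = 0. -/
lemma fin4_distinct4 : ∀ i j s t : Fin 4, ({i, j, s, t} : Finset (Fin 4)) = Finset.univ →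
    i ≠ j ∧ i ≠ s ∧ i ≠ t ∧ j ≠ s ∧ j ≠ t ∧ s ≠ t := by decide

lemma fin4_perm : ∀ i j s t : Fin 4, ({i, j, s, t} : Finset (Fin 4)) = Finset.univ →
    ({i, s, j, t} : Finset (Fin 4)) = Finset.univ := by decide

/-- Under condition (P), if every pair sum `a i + a j` equals `ε i j` times the complementary
pair sum with `ε i j = ±1`, then all signs are `−1` and `a 0 + a 1 + a 2 + a 3 = 0`. -/
theorem condition_P_all_signs_neg (a : Fin 4 → ℝ)
    (hdist : Function.Injective (Sum.elim a (fun i => -a i) : Fin 4 ⊕ Fin 4 → ℝ))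
    (hAP : ∀ p ∈ Set.range (Sum.elim a (fun i => -a i) : Fin 4 ⊕ Fin 4 → ℝ),
      ∀ q ∈ Set.range (Sum.elim a (fun i => -a i) : Fin 4 ⊕ Fin 4 → ℝ),
      ∀ s ∈ Set.range (Sum.elim a (fun i => -a i) : Fin 4 ⊕ Fin 4 → ℝ),
      p ≠ q → p ≠ s → q ≠ s → p + q ≠ 2 * s)
    (ε : Fin 4 → Fin 4 → ℝ)
    (hεval : ∀ i j, i ≠ j → ε i j = 1 ∨ ε i j = -1)
    (hrel : ∀ i j s t : Fin 4, ({i, j, s, t} : Finset (Fin 4)) = Finset.univ →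
      a i + a j = ε i j * (a s + a t)) :
    (∀ i j s t : Fin 4, ({i, j, s, t} : Finset (Fin 4)) = Finset.univ → ε i j = -1) ∧
      a 0 + a 1 + a 2 + a 3 = 0 := by
  have ha_ne : ∀ i j : Fin 4, i ≠ j → a i ≠ a j := by
    intro i j hij heq
    exact hij (Sum.inl.inj (hdist (show (Sum.elim a (fun i => -a i)) (Sum.inl i)
      = (Sum.elim a (fun i => -a i)) (Sum.inl j) from heq)))
  have ha_neg : ∀ i j : Fin 4, a i ≠ -a j := by
    intro i j heq
    exact absurd (hdist (show (Sum.elim a (fun i => -a i)) (Sum.inl i)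
      = (Sum.elim a (fun i => -a i)) (Sum.inr j) from heq)) (by simp)
  have key : ∀ i j s t : Fin 4, ({i, j, s, t} : Finset (Fin 4)) = Finset.univ → ε i j = -1 := by
    intro i j s t h
    obtain ⟨hij, his, hit, hjs, hjt, hst⟩ := fin4_distinct4 i j s t h
    have e1 := hrel i j s t h
    have e2 := hrel i s j t (fin4_perm i j s t h)
    rcases hεval i j hij with h1 | h1
    · exfalso
      rw [h1, one_mul] at e1
      rcases hεval i s his with h2 | h2
      · rw [h2, one_mul] at e2
        exact ha_ne j s hjs (by linarith)
      · rw [h2] at e2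
        exact ha_neg i j (by linarith)
    · exact h1
  refine ⟨key, ?_⟩
  have h0 : ({0, 1, 2, 3} : Finset (Fin 4)) = Finset.univ := by decide
  have := hrel 0 1 2 3 h0
  rw [key 0 1 2 3 h0] at this
  linarith
end

section
/- Let n, m and a₁, a₂, a₃, a₄ be real numbers such that the eight numbers a₁, a₂, a₃, a₄, n−a₁, n−a₂, n−a₃, n−a₄ are pairwise distinct and no three distinct numbers among them form a three-term arithmetic progression (no distinct p, q, s among the eight with p + q = 2s). Let x₁, …, x₆ be real numbers and suppose that the multiset {aᵢ + aⱼ + m : 1 ≤ i ≤ j ≤ 4} ∪ {2n − (aᵢ + aⱼ) + m : 1 ≤ i ≤ j ≤ 4} (of size 20) equals the multiset {xᵢ + xⱼ + x_k : 1 ≤ i < j < k ≤ 6} (of size 20). Then x₁, …, x₆ are pairwise distinct. -/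
open Finset in
private def S4 : Finset (Fin 4 × Fin 4) := Finset.univ.filter fun p : Fin 4 × Fin 4 => p.1 ≤ p.2
open Finset in
private def S6 : Finset (Fin 6 × Fin 6 × Fin 6) :=
  Finset.univ.filter fun p : Fin 6 × Fin 6 × Fin 6 => p.1 < p.2.1 ∧ p.2.1 < p.2.2

private def ML (n m : ℝ) (a : Fin 4 → ℝ) : Multiset ℝ :=
  S4.val.map (fun p => a p.1 + a p.2 + m) + S4.val.map (fun p => 2 * n - (a p.1 + a p.2) + m)

private def MR (x : Fin 6 → ℝ) : Multiset ℝ :=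
  S6.val.map (fun p => x p.1 + x p.2.1 + x p.2.2)

private lemma cntL_eq (n m : ℝ) (a : Fin 4 → ℝ) (v : ℝ) :
    (ML n m a).count v = (S4.filter (fun p => v = a p.1 + a p.2 + m)).card
      + (S4.filter (fun p => v = 2 * n - (a p.1 + a p.2) + m)).card := by
  simp [ML, Multiset.count_map, Finset.card, Finset.filter_val]

private lemma cntR_eq (x : Fin 6 → ℝ) (v : ℝ) :
    (MR x).count v = (S6.filter (fun p => v = x p.1 + x p.2.1 + x p.2.2)).card := by
  simp [MR, Multiset.count_map, Finset.card, Finset.filter_val]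

private lemma mem_S4 (p : Fin 4 × Fin 4) : p ∈ S4 ↔ p.1 ≤ p.2 := by
  simp [S4]

private lemma mem_S6 (p : Fin 6 × Fin 6 × Fin 6) : p ∈ S6 ↔ p.1 < p.2.1 ∧ p.2.1 < p.2.2 := by
  simp [S6]

private lemma mem_ML {n m : ℝ} {a : Fin 4 → ℝ} {v : ℝ} (h : v ∈ ML n m a) :
    (∃ p : Fin 4 × Fin 4, p.1 ≤ p.2 ∧ v = a p.1 + a p.2 + m) ∨
    (∃ p : Fin 4 × Fin 4, p.1 ≤ p.2 ∧ v = 2 * n - (a p.1 + a p.2) + m) := by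
  rcases Multiset.mem_add.1 h with h | h <;>
    obtain ⟨p, hp, rfl⟩ := Multiset.mem_map.1 h
  · exact Or.inl ⟨p, (mem_S4 p).1 hp, rfl⟩
  · exact Or.inr ⟨p, (mem_S4 p).1 hp, rfl⟩

private lemma mem_MR {x : Fin 6 → ℝ} {v : ℝ} (h : v ∈ MR x) :
    ∃ p : Fin 6 × Fin 6 × Fin 6, (p.1 < p.2.1 ∧ p.2.1 < p.2.2) ∧ v = x p.1 + x p.2.1 + x p.2.2 := by
  obtain ⟨p, hp, rfl⟩ := Multiset.mem_map.1 h
  exact ⟨p, (mem_S6 p).1 hp, rfl⟩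

/-- two distinct members of a multiset give card ≥ 2 on a filter they satisfy -/
private lemma two_le_card_filter {M : Multiset ℝ} {p : ℝ → Prop} [DecidablePred p]
    {u1 u2 : ℝ} (hne : u1 ≠ u2) (h1 : u1 ∈ M) (h2 : u2 ∈ M) (hp1 : p u1) (hp2 : p u2) :
    2 ≤ Multiset.card (M.filter p) := by
  have h1' : u1 ∈ M.filter p := Multiset.mem_filter.2 ⟨h1, hp1⟩
  have h2' : u2 ∈ M.filter p := Multiset.mem_filter.2 ⟨h2, hp2⟩
  have : ({u1, u2} : Multiset ℝ) ≤ M.filter p := by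
    rw [Multiset.le_iff_count]
    intro b
    by_cases hb1 : b = u1
    · subst hb1
      simpa [Multiset.count_cons, Multiset.count_singleton, hne] using
        Multiset.one_le_count_iff_mem.2 h1'
    · by_cases hb2 : b = u2
      · subst hb2
        simpa [Multiset.count_cons, Multiset.count_singleton, Ne.symm hne, hb1] using
          Multiset.one_le_count_iff_mem.2 h2'
      · simp [Multiset.count_cons, Multiset.count_singleton, hb1, hb2]
  simpa using Multiset.card_le_card this

/-- two distinct members of a finset filter give 2 ≤ card -/
private lemma two_le_card_finset {α : Type*} [DecidableEq α] {s : Finset α} {u1 u2 : α}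
    (hne : u1 ≠ u2) (h1 : u1 ∈ s) (h2 : u2 ∈ s) : 2 ≤ s.card := by
  classical
  have : ({u1, u2} : Finset α) ⊆ s := by
    intro z hz
    rcases Finset.mem_insert.1 hz with rfl | hz
    · exact h1
    · rw [Finset.mem_singleton.1 hz]; exact h2
  calc 2 = ({u1, u2} : Finset α).card := (Finset.card_pair hne).symm
    _ ≤ s.card := Finset.card_le_card this

/-- extract two distinct elements from 2 ≤ card -/
private lemma exists_two {α : Type*} {s : Finset α} (h : 2 ≤ s.card) :
    ∃ u ∈ s, ∃ v ∈ s, u ≠ v := Finset.one_lt_card.1 h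

/-- membership from 2 ≤ count -/
private lemma count_two_reps {n m : ℝ} {a : Fin 4 → ℝ} {v : ℝ}
    (h : 2 ≤ (ML n m a).count v) :
    (∃ p q : Fin 4 × Fin 4, p.1 ≤ p.2 ∧ q.1 ≤ q.2 ∧ p ≠ q ∧
        v = a p.1 + a p.2 + m ∧ v = a q.1 + a q.2 + m) ∨
    (∃ p q : Fin 4 × Fin 4, p.1 ≤ p.2 ∧ q.1 ≤ q.2 ∧ p ≠ q ∧
        v = 2*n - (a p.1 + a p.2) + m ∧ v = 2*n - (a q.1 + a q.2) + m) ∨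
    (∃ p q : Fin 4 × Fin 4, p.1 ≤ p.2 ∧ q.1 ≤ q.2 ∧
        v = a p.1 + a p.2 + m ∧ v = 2*n - (a q.1 + a q.2) + m) := by
  classical
  rw [cntL_eq] at h
  set sA := S4.filter (fun p => v = a p.1 + a p.2 + m) with hsA
  set sB := S4.filter (fun p => v = 2 * n - (a p.1 + a p.2) + m) with hsB
  rcases Nat.lt_or_ge sA.card 1 with hA | hA
  · -- sA empty, sB ≥ 2
    have hB : 2 ≤ sB.card := by omega
    obtain ⟨p, hp, q, hq, hpq⟩ := exists_two hB
    rw [hsB, Finset.mem_filter] at hp hq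
    exact Or.inr (Or.inl ⟨p, q, (mem_S4 p).1 hp.1, (mem_S4 q).1 hq.1, hpq, hp.2, hq.2⟩)
  · rcases Nat.lt_or_ge sB.card 1 with hB | hB
    · have hA2 : 2 ≤ sA.card := by omega
      obtain ⟨p, hp, q, hq, hpq⟩ := exists_two hA2
      rw [hsA, Finset.mem_filter] at hp hq
      exact Or.inl ⟨p, q, (mem_S4 p).1 hp.1, (mem_S4 q).1 hq.1, hpq, hp.2, hq.2⟩
    · obtain ⟨p, hp⟩ := Finset.card_pos.1 hA
      obtain ⟨q, hq⟩ := Finset.card_pos.1 hB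
      rw [hsA, Finset.mem_filter] at hp
      rw [hsB, Finset.mem_filter] at hq
      exact Or.inr (Or.inr ⟨p, q, (mem_S4 p).1 hp.1, (mem_S4 q).1 hq.1, hp.2, hq.2⟩)

section Lside

variable {n m : ℝ} {a : Fin 4 → ℝ}

private def El (n : ℝ) (a : Fin 4 → ℝ) : Fin 4 ⊕ Fin 4 → ℝ := Sum.elim a (fun i => n - a i)

variable (hNe : ∀ w1 w2 : Fin 4 ⊕ Fin 4, w1 ≠ w2 → El n a w1 ≠ El n a w2)
variable (hAP3 : ∀ w1 w2 w3 : Fin 4 ⊕ Fin 4, w1 ≠ w2 → w1 ≠ w3 → w2 ≠ w3 →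
  El n a w1 + El n a w2 ≠ 2 * El n a w3)

include hNe in
private lemma Haa : ∀ i j : Fin 4, i ≠ j → a i ≠ a j := fun i j h =>
  hNe (Sum.inl i) (Sum.inl j) (by simp [h])

include hNe in
private lemma Hbb : ∀ i j : Fin 4, i ≠ j → n - a i ≠ n - a j := fun i j h =>
  hNe (Sum.inr i) (Sum.inr j) (by simp [h])

include hNe in
private lemma Hab : ∀ i j : Fin 4, a i ≠ n - a j := fun i j =>
  hNe (Sum.inl i) (Sum.inr j) (by simp)

include hAP3 in
private lemma Paaa : ∀ i j k : Fin 4, i ≠ j → i ≠ k → j ≠ k → a i + a j ≠ 2 * a k :=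
  fun i j k h1 h2 h3 => hAP3 (Sum.inl i) (Sum.inl j) (Sum.inl k)
    (by simp [h1]) (by simp [h2]) (by simp [h3])

include hAP3 in
private lemma Paab : ∀ i j k : Fin 4, i ≠ j → a i + a j ≠ 2 * (n - a k) :=
  fun i j k h1 => hAP3 (Sum.inl i) (Sum.inl j) (Sum.inr k)
    (by simp [h1]) (by simp) (by simp)

include hAP3 in
private lemma Pbba : ∀ i j k : Fin 4, i ≠ j → (n - a i) + (n - a j) ≠ 2 * a k :=
  fun i j k h1 => hAP3 (Sum.inr i) (Sum.inr j) (Sum.inl k)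
    (by simp [h1]) (by simp) (by simp)

include hAP3 in
private lemma Pbbb : ∀ i j k : Fin 4, i ≠ j → i ≠ k → j ≠ k →
    (n - a i) + (n - a j) ≠ 2 * (n - a k) :=
  fun i j k h1 h2 h3 => hAP3 (Sum.inr i) (Sum.inr j) (Sum.inr k)
    (by simp [h1]) (by simp [h2]) (by simp [h3])

/-- two distinct off-diagonal representations of the same value are disjoint -/
private lemma disjointA {b : Fin 4 → ℝ} (hb : ∀ i j : Fin 4, i ≠ j → b i ≠ b j)
    {k1 l1 k2 l2 : Fin 4} (h1 : k1 < l1) (h2 : k2 < l2) (hv : b k1 + b l1 = b k2 + b l2)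
    (hne : (k1, l1) ≠ (k2, l2)) : k1 ≠ k2 ∧ k1 ≠ l2 ∧ l1 ≠ k2 ∧ l1 ≠ l2 := by
  have hkl1 : k1 ≠ l1 := ne_of_lt h1
  have hkl2 : k2 ≠ l2 := ne_of_lt h2
  have hll : l1 ≠ l2 := by
    rintro rfl
    have hk : k1 = k2 := by
      by_contra hk
      exact hb _ _ hk (by linarith)
    exact hne (by rw [hk])
  have hkk : k1 ≠ k2 := by
    rintro rfl
    exact hll (by
      by_contra hl
      exact hb _ _ hl (by linarith))
  have hkl : k1 ≠ l2 := by
    rintro rfl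
    have : l1 = k2 := by
      by_contra hl
      exact hb _ _ hl (by linarith)
    subst this
    exact absurd (h1.trans h2) (lt_irrefl _)
  have hlk : l1 ≠ k2 := by
    rintro rfl
    have : k1 = l2 := by
      by_contra hl
      exact hb _ _ hl (by linarith)
    subst this
    exact absurd (h1.trans h2) (lt_irrefl _)
  exact ⟨hkk, hkl, hlk, hll⟩

/-- diagonal elements are members -/
private lemma dA (i : Fin 4) : 2 * a i + m ∈ ML n m a := by
  refine Multiset.mem_add.2 (Or.inl (Multiset.mem_map.2 ⟨(i, i), ?_, by ring⟩))
  have : (i, i) ∈ S4 := (mem_S4 _).2 (le_refl i)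
  exact this

private lemma dB (i : Fin 4) : 2 * (n - a i) + m ∈ ML n m a := by
  refine Multiset.mem_add.2 (Or.inr (Multiset.mem_map.2 ⟨(i, i), ?_, by ring⟩))
  have : (i, i) ∈ S4 := (mem_S4 _).2 (le_refl i)
  exact this

include hNe hAP3 in
/-- an off-diagonal A-rep `a k + a l` of a value `2 a i` (diagonal) is impossible, etc. -/
private lemma killAdiagA {i k l : Fin 4} (hkl : k < l) (h : a k + a l = 2 * a i) : False := by
  rcases eq_or_ne i k with rfl | hik
  · exact Haa hNe l i (ne_of_gt hkl) (by linarith)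
  rcases eq_or_ne i l with rfl | hil
  · exact Haa hNe k i (ne_of_lt hkl) (by linarith)
  · exact Paaa hAP3 k l i (ne_of_lt hkl) (Ne.symm hik) (Ne.symm hil) h

include hNe hAP3 in
private lemma killBdiagB {i k l : Fin 4} (hkl : k < l) (h : (n - a k) + (n - a l) = 2 * (n - a i)) :
    False := by
  rcases eq_or_ne i k with rfl | hik
  · exact Hbb hNe l i (ne_of_gt hkl) (by linarith)
  rcases eq_or_ne i l with rfl | hil
  · exact Hbb hNe k i (ne_of_lt hkl) (by linarith)
  · exact Pbbb hAP3 k l i (ne_of_lt hkl) (Ne.symm hik) (Ne.symm hil) h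

include hNe hAP3 in
/-- the multiplicity of each diagonal A-value in ML is at most 1 -/
private lemma diag_count_A (i : Fin 4) : (ML n m a).count (2 * a i + m) ≤ 1 := by
  by_contra hc
  push_neg at hc
  rcases count_two_reps hc with ⟨p, q, hp, hq, hpq, hvp, hvq⟩ | ⟨p, q, hp, hq, hpq, hvp, hvq⟩ |
    ⟨p, q, hp, hq, hvp, hvq⟩
  · -- both A-reps
    rcases lt_or_eq_of_le hp with hp' | hp'
    · exact killAdiagA hNe hAP3 (i := i) hp' (by linarith)
    rcases lt_or_eq_of_le hq with hq' | hq'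
    · exact killAdiagA hNe hAP3 (i := i) hq' (by linarith)
    · -- both diagonal
      have h1 : a p.1 = a q.1 := by rw [← hp'] at hvp; rw [← hq'] at hvq; linarith
      have : p.1 = q.1 := by
        by_contra hne
        exact Haa hNe _ _ hne h1
      exact hpq (Prod.ext this (by rw [← hp', ← hq', this]))
  · -- both B-reps of a diagonal A-value
    rcases lt_or_eq_of_le hp with hp' | hp'
    · exact Pbba hAP3 p.1 p.2 i (ne_of_lt hp') (by linarith)
    · rw [← hp'] at hvp
      exact Hab hNe i p.1 (by linarith)
  · -- the B-rep kills
    rcases lt_or_eq_of_le hq with hq' | hq'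
    · exact Pbba hAP3 q.1 q.2 i (ne_of_lt hq') (by linarith)
    · rw [← hq'] at hvq
      exact Hab hNe i q.1 (by linarith)

include hNe hAP3 in
private lemma diag_count_B (i : Fin 4) : (ML n m a).count (2 * (n - a i) + m) ≤ 1 := by
  by_contra hc
  push_neg at hc
  rcases count_two_reps hc with ⟨p, q, hp, hq, hpq, hvp, hvq⟩ | ⟨p, q, hp, hq, hpq, hvp, hvq⟩ |
    ⟨p, q, hp, hq, hvp, hvq⟩
  · rcases lt_or_eq_of_le hp with hp' | hp'
    · exact Paab hAP3 p.1 p.2 i (ne_of_lt hp') (by linarith)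
    · rw [← hp'] at hvp
      exact Hab hNe p.1 i (by linarith)
  · rcases lt_or_eq_of_le hp with hp' | hp'
    · exact killBdiagB hNe hAP3 (i := i) hp' (by linarith)
    rcases lt_or_eq_of_le hq with hq' | hq'
    · exact killBdiagB hNe hAP3 (i := i) hq' (by linarith)
    · have h1 : a p.1 = a q.1 := by rw [← hp'] at hvp; rw [← hq'] at hvq; linarith
      have : p.1 = q.1 := by
        by_contra hne
        exact Haa hNe _ _ hne h1
      exact hpq (Prod.ext this (by rw [← hp', ← hq', this]))
  · rcases lt_or_eq_of_le hp with hp' | hp'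
    · exact Paab hAP3 p.1 p.2 i (ne_of_lt hp') (by linarith)
    · rw [← hp'] at hvp
      exact Hab hNe p.1 i (by linarith)

end Lside

section ClaimC

variable {n m : ℝ} {a : Fin 4 → ℝ}
variable (hNe : ∀ w1 w2 : Fin 4 ⊕ Fin 4, w1 ≠ w2 → El n a w1 ≠ El n a w2)
variable (hAP3 : ∀ w1 w2 w3 : Fin 4 ⊕ Fin 4, w1 ≠ w2 → w1 ≠ w3 → w2 ≠ w3 →
  El n a w1 + El n a w2 ≠ 2 * El n a w3)

include hNe hAP3 in
/-- Claim C : a value of multiplicity ≥ 2 in ML has ≥ 2 elements of ML strictly above it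
and ≥ 2 strictly below it -/
private lemma claimC {v : ℝ} (hv : 2 ≤ (ML n m a).count v) :
    2 ≤ Multiset.card ((ML n m a).filter (fun u => v < u)) ∧
    2 ≤ Multiset.card ((ML n m a).filter (fun u => u < v)) := by
  classical
  rcases count_two_reps hv with ⟨p, q, hp, hq, hpq, hvp, hvq⟩ | ⟨p, q, hp, hq, hpq, hvp, hvq⟩ |
    ⟨p, q, hp, hq, hvp, hvq⟩
  · -- two A-reps : both must be off-diagonal
    rcases lt_or_eq_of_le hp with hp' | hp'
    · rcases lt_or_eq_of_le hq with hq' | hq'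
      · -- both off-diagonal, disjoint
        obtain ⟨d1, d2, d3, d4⟩ := disjointA (Haa hNe) hp' hq' (by linarith)
          (by intro h; exact hpq (by rw [Prod.ext_iff] at h ⊢; exact ⟨h.1, h.2⟩))
        rcases lt_or_gt_of_ne (Haa hNe _ _ (ne_of_lt hp')) with h1 | h1 <;>
          rcases lt_or_gt_of_ne (Haa hNe _ _ (ne_of_lt hq')) with h2 | h2
        · exact ⟨two_le_card_filter (fun h => Haa hNe p.2 q.2 d4 (by linarith)) (dA p.2) (dA q.2)
              (by show _ < _; linarith) (by show _ < _; linarith),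
            two_le_card_filter (fun h => Haa hNe p.1 q.1 d1 (by linarith)) (dA p.1) (dA q.1)
              (by show _ < _; linarith) (by show _ < _; linarith)⟩
        · exact ⟨two_le_card_filter (fun h => Haa hNe p.2 q.1 d3 (by linarith)) (dA p.2) (dA q.1)
              (by show _ < _; linarith) (by show _ < _; linarith),
            two_le_card_filter (fun h => Haa hNe p.1 q.2 d2 (by linarith)) (dA p.1) (dA q.2)
              (by show _ < _; linarith) (by show _ < _; linarith)⟩
        · exact ⟨two_le_card_filter (fun h => Haa hNe p.1 q.2 d2 (by linarith)) (dA p.1) (dA q.2)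
              (by show _ < _; linarith) (by show _ < _; linarith),
            two_le_card_filter (fun h => Haa hNe p.2 q.1 d3 (by linarith)) (dA p.2) (dA q.1)
              (by show _ < _; linarith) (by show _ < _; linarith)⟩
        · exact ⟨two_le_card_filter (fun h => Haa hNe p.1 q.1 d1 (by linarith)) (dA p.1) (dA q.1)
              (by show _ < _; linarith) (by show _ < _; linarith),
            two_le_card_filter (fun h => Haa hNe p.2 q.2 d4 (by linarith)) (dA p.2) (dA q.2)
              (by show _ < _; linarith) (by show _ < _; linarith)⟩
      · -- q diagonal : kill
        rw [← hq'] at hvq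
        exact (killAdiagA hNe hAP3 (i := q.1) hp' (by linarith)).elim
    · rcases lt_or_eq_of_le hq with hq' | hq'
      · rw [← hp'] at hvp
        exact (killAdiagA hNe hAP3 (i := p.1) hq' (by linarith)).elim
      · -- both diagonal : p = q, contradiction
        rw [← hp'] at hvp; rw [← hq'] at hvq
        have h1 : a p.1 = a q.1 := by linarith
        have : p.1 = q.1 := by by_contra hne; exact Haa hNe _ _ hne h1
        exact absurd (Prod.ext this (by rw [← hp', ← hq', this])) hpq
  · -- two B-reps
    rcases lt_or_eq_of_le hp with hp' | hp'
    · rcases lt_or_eq_of_le hq with hq' | hq'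
      · obtain ⟨d1, d2, d3, d4⟩ := disjointA (Hbb hNe) hp' hq'
          (by show n - a p.1 + (n - a p.2) = n - a q.1 + (n - a q.2); linarith)
          (by intro h; exact hpq (by rw [Prod.ext_iff] at h ⊢; exact ⟨h.1, h.2⟩))
        rcases lt_or_gt_of_ne (Hbb hNe _ _ (ne_of_lt hp')) with h1 | h1 <;>
          rcases lt_or_gt_of_ne (Hbb hNe _ _ (ne_of_lt hq')) with h2 | h2
        · exact ⟨two_le_card_filter (fun h => Hbb hNe p.2 q.2 d4 (by linarith)) (dB p.2) (dB q.2)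
              (by show _ < _; linarith) (by show _ < _; linarith),
            two_le_card_filter (fun h => Hbb hNe p.1 q.1 d1 (by linarith)) (dB p.1) (dB q.1)
              (by show _ < _; linarith) (by show _ < _; linarith)⟩
        · exact ⟨two_le_card_filter (fun h => Hbb hNe p.2 q.1 d3 (by linarith)) (dB p.2) (dB q.1)
              (by show _ < _; linarith) (by show _ < _; linarith),
            two_le_card_filter (fun h => Hbb hNe p.1 q.2 d2 (by linarith)) (dB p.1) (dB q.2)
              (by show _ < _; linarith) (by show _ < _; linarith)⟩
        · exact ⟨two_le_card_filter (fun h => Hbb hNe p.1 q.2 d2 (by linarith)) (dB p.1) (dB q.2)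
              (by show _ < _; linarith) (by show _ < _; linarith),
            two_le_card_filter (fun h => Hbb hNe p.2 q.1 d3 (by linarith)) (dB p.2) (dB q.1)
              (by show _ < _; linarith) (by show _ < _; linarith)⟩
        · exact ⟨two_le_card_filter (fun h => Hbb hNe p.1 q.1 d1 (by linarith)) (dB p.1) (dB q.1)
              (by show _ < _; linarith) (by show _ < _; linarith),
            two_le_card_filter (fun h => Hbb hNe p.2 q.2 d4 (by linarith)) (dB p.2) (dB q.2)
              (by show _ < _; linarith) (by show _ < _; linarith)⟩
      · rw [← hq'] at hvq
        exact (killBdiagB hNe hAP3 (i := q.1) hp'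
          (by show n - a p.1 + (n - a p.2) = 2 * (n - a q.1); linarith)).elim
    · rcases lt_or_eq_of_le hq with hq' | hq'
      · rw [← hp'] at hvp
        exact (killBdiagB hNe hAP3 (i := p.1) hq'
          (by show n - a q.1 + (n - a q.2) = 2 * (n - a p.1); linarith)).elim
      · rw [← hp'] at hvp; rw [← hq'] at hvq
        have h1 : a p.1 = a q.1 := by linarith
        have : p.1 = q.1 := by by_contra hne; exact Haa hNe _ _ hne h1
        exact absurd (Prod.ext this (by rw [← hp', ← hq', this])) hpq
  · -- one A-rep, one B-rep
    rcases lt_or_eq_of_le hp with hp' | hp'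
    · rcases lt_or_eq_of_le hq with hq' | hq'
      · -- both off-diagonal
        rcases lt_or_gt_of_ne (Haa hNe _ _ (ne_of_lt hp')) with h1 | h1 <;>
          rcases lt_or_gt_of_ne (Hbb hNe _ _ (ne_of_lt hq')) with h2 | h2
        · exact ⟨two_le_card_filter (fun h => Hab hNe p.2 q.2 (by linarith)) (dA p.2) (dB q.2)
              (by show _ < _; linarith) (by show _ < _; linarith),
            two_le_card_filter (fun h => Hab hNe p.1 q.1 (by linarith)) (dA p.1) (dB q.1)
              (by show _ < _; linarith) (by show _ < _; linarith)⟩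
        · exact ⟨two_le_card_filter (fun h => Hab hNe p.2 q.1 (by linarith)) (dA p.2) (dB q.1)
              (by show _ < _; linarith) (by show _ < _; linarith),
            two_le_card_filter (fun h => Hab hNe p.1 q.2 (by linarith)) (dA p.1) (dB q.2)
              (by show _ < _; linarith) (by show _ < _; linarith)⟩
        · exact ⟨two_le_card_filter (fun h => Hab hNe p.1 q.2 (by linarith)) (dA p.1) (dB q.2)
              (by show _ < _; linarith) (by show _ < _; linarith),
            two_le_card_filter (fun h => Hab hNe p.2 q.1 (by linarith)) (dA p.2) (dB q.1)
              (by show _ < _; linarith) (by show _ < _; linarith)⟩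
        · exact ⟨two_le_card_filter (fun h => Hab hNe p.1 q.1 (by linarith)) (dA p.1) (dB q.1)
              (by show _ < _; linarith) (by show _ < _; linarith),
            two_le_card_filter (fun h => Hab hNe p.2 q.2 (by linarith)) (dA p.2) (dB q.2)
              (by show _ < _; linarith) (by show _ < _; linarith)⟩
      · -- B diagonal : kill
        rw [← hq'] at hvq
        exact (Paab hAP3 p.1 p.2 q.1 (ne_of_lt hp') (by linarith)).elim
    · rcases lt_or_eq_of_le hq with hq' | hq'
      · rw [← hp'] at hvp
        exact (Pbba hAP3 q.1 q.2 p.1 (ne_of_lt hq')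
          (by show n - a q.1 + (n - a q.2) = 2 * a p.1; linarith)).elim
      · rw [← hp'] at hvp; rw [← hq'] at hvq
        exact (Hab hNe p.1 q.1 (by linarith)).elim

end ClaimC

private def emb3 (p : Fin 6 × Fin 6 × Fin 6) : Finset (Fin 6) := {p.1, p.2.1, p.2.2}

set_option maxRecDepth 10000 in
private lemma S6img : S6.image emb3 = Finset.univ.powersetCard 3 := by decide

set_option maxRecDepth 100000 in
private lemma emb3inj : ∀ p ∈ S6, ∀ q ∈ S6, emb3 p = emb3 q → p = q := by decide

private lemma sum_emb3 (x : Fin 6 → ℝ) (p : Fin 6 × Fin 6 × Fin 6) (hp : p ∈ S6) :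
    (emb3 p).sum x = x p.1 + x p.2.1 + x p.2.2 := by
  obtain ⟨h1, h2⟩ : p.1 < p.2.1 ∧ p.2.1 < p.2.2 := by
    simpa [S6] using hp
  rw [emb3, Finset.sum_insert (by
      simp only [Finset.mem_insert, Finset.mem_singleton]
      push_neg
      exact ⟨ne_of_lt h1, ne_of_lt (h1.trans h2)⟩),
    Finset.sum_insert (by simp [ne_of_lt h2]), Finset.sum_singleton]
  ring

private lemma tri_eq (x : Fin 6 → ℝ) :
    S6.val.map (fun p => x p.1 + x p.2.1 + x p.2.2)
      = (Finset.univ.powersetCard 3).val.map (fun s => s.sum x) := by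
  rw [← S6img, Finset.image_val_of_injOn (fun p hp q hq h => emb3inj p hp q hq h),
    Multiset.map_map]
  exact (Multiset.map_congr rfl (fun p hp => sum_emb3 x p hp)).symm

private lemma MR_perm (x : Fin 6 → ℝ) (π : Equiv.Perm (Fin 6)) :
    S6.val.map (fun p => (x ∘ ⇑π) p.1 + (x ∘ ⇑π) p.2.1 + (x ∘ ⇑π) p.2.2)
      = S6.val.map (fun p => x p.1 + x p.2.1 + x p.2.2) := by
  rw [tri_eq, tri_eq]
  have key : (Finset.univ.powersetCard 3).val.map (Finset.map π.toEmbedding)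
      = (Finset.univ.powersetCard 3).val := by
    have h := Finset.powersetCard_map π.toEmbedding 3 Finset.univ
    rw [Finset.map_univ_equiv] at h
    conv_rhs => rw [h]
    rw [Finset.map_val]
    refine Multiset.map_congr rfl (fun s _ => ?_)
    show _ = Finset.mapEmbedding (Equiv.toEmbedding π) s
    rw [Finset.mapEmbedding_apply]
  calc (Finset.univ.powersetCard 3).val.map (fun s => s.sum (x ∘ ⇑π))
      = (Finset.univ.powersetCard 3).val.map ((fun s => s.sum x) ∘ (Finset.map π.toEmbedding)) := by
        refine Multiset.map_congr rfl (fun s _ => ?_)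
        simp only [Function.comp_apply]
        rw [Finset.sum_map]
        rfl
    _ = ((Finset.univ.powersetCard 3).val.map (Finset.map π.toEmbedding)).map
          (fun s => s.sum x) := by rw [Multiset.map_map]
    _ = (Finset.univ.powersetCard 3).val.map (fun s => s.sum x) := by rw [key]

private lemma MR_comp_perm (x : Fin 6 → ℝ) (π : Equiv.Perm (Fin 6)) :
    MR (x ∘ ⇑π) = MR x := MR_perm x π

private lemma MR_neg (x : Fin 6 → ℝ) :
    MR (fun i => -x i) = (MR x).map (fun u => -u) := by
  rw [MR, MR, Multiset.map_map]
  refine Multiset.map_congr rfl (fun p _ => ?_)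
  simp only [Function.comp_apply]
  ring

private lemma ML_neg (n m : ℝ) (a : Fin 4 → ℝ) :
    ML (-n) (-m) (fun i => -a i) = (ML n m a).map (fun u => -u) := by
  rw [ML, ML, Multiset.map_add, Multiset.map_map, Multiset.map_map]
  congr 1 <;> refine Multiset.map_congr rfl (fun p _ => ?_) <;>
    simp only [Function.comp_apply] <;> ring

private lemma cardR (x : Fin 6 → ℝ) (p : ℝ → Prop) [DecidablePred p] :
    Multiset.card ((MR x).filter p) =
      (S6.filter (fun q => p (x q.1 + x q.2.1 + x q.2.2))).card := by
  rw [MR, Multiset.filter_map, Multiset.card_map]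
  simp [Finset.card, Finset.filter_val, Function.comp]

private lemma mono_le {y : Fin 6 → ℝ} (hm : Monotone y) {i j : Fin 6} (h : i.val ≤ j.val) :
    y i ≤ y j := hm (Fin.le_def.2 h)

section Kills

variable {n m : ℝ} {a : Fin 4 → ℝ} {y : Fin 6 → ℝ}
variable (hNe : ∀ w1 w2 : Fin 4 ⊕ Fin 4, w1 ≠ w2 → El n a w1 ≠ El n a w2)
variable (hAP3 : ∀ w1 w2 w3 : Fin 4 ⊕ Fin 4, w1 ≠ w2 → w1 ≠ w3 → w2 ≠ w3 →
  El n a w1 + El n a w2 ≠ 2 * El n a w3)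
variable (hmono : Monotone y) (hL : ML n m a = MR y)

include hNe hAP3 hmono hL in
private lemma kill23 : y 2 ≠ y 3 := by
  classical
  intro h
  set v := y 3 + y 4 + y 5 with hv
  have hcnt : 2 ≤ (ML n m a).count v := by
    rw [hL, cntR_eq]
    refine two_le_card_finset (u1 := ((2:Fin 6), (4:Fin 6), (5:Fin 6)))
      (u2 := ((3:Fin 6), (4:Fin 6), (5:Fin 6))) (by decide) ?_ ?_
    · exact Finset.mem_filter.2 ⟨(mem_S6 _).2 (by decide), by simp only; rw [hv, h]⟩
    · exact Finset.mem_filter.2 ⟨(mem_S6 _).2 (by decide), by simp only [hv]⟩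
  have habove := (claimC hNe hAP3 hcnt).1
  rw [hL, cardR] at habove
  have hempty : (S6.filter (fun q => v < y q.1 + y q.2.1 + y q.2.2)) = ∅ := by
    refine Finset.eq_empty_of_forall_notMem (fun q hq => ?_)
    obtain ⟨hq1, hq2⟩ := Finset.mem_filter.1 hq
    obtain ⟨hij, hjk⟩ := (mem_S6 _).1 hq1
    rw [Fin.lt_def] at hij hjk
    have b1 : y q.1 ≤ y 3 := mono_le hmono (by omega)
    have b2 : y q.2.1 ≤ y 4 := mono_le hmono (by omega)
    have b3 : y q.2.2 ≤ y 5 := mono_le hmono (by omega)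
    have hq2 : _ := hq2
    linarith
  rw [hempty] at habove
  simp at habove

include hNe hAP3 hmono hL in
private lemma kill12 : y 1 ≠ y 2 := by
  classical
  intro h
  set v := y 2 + y 4 + y 5 with hv
  have hcnt : 2 ≤ (ML n m a).count v := by
    rw [hL, cntR_eq]
    refine two_le_card_finset (u1 := ((1:Fin 6), (4:Fin 6), (5:Fin 6)))
      (u2 := ((2:Fin 6), (4:Fin 6), (5:Fin 6))) (by decide) ?_ ?_
    · exact Finset.mem_filter.2 ⟨(mem_S6 _).2 (by decide), by simp only; rw [hv, h]⟩
    · exact Finset.mem_filter.2 ⟨(mem_S6 _).2 (by decide), by simp only [hv]⟩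
  have habove := (claimC hNe hAP3 hcnt).1
  rw [hL, cardR] at habove
  have hsub : (S6.filter (fun q => v < y q.1 + y q.2.1 + y q.2.2)) ⊆
      {((3:Fin 6), (4:Fin 6), (5:Fin 6))} := by
    intro q hq
    obtain ⟨hq1, hq2⟩ := Finset.mem_filter.1 hq
    obtain ⟨hij, hjk⟩ := (mem_S6 _).1 hq1
    rw [Fin.lt_def] at hij hjk
    have hq2 : _ := hq2
    rcases Nat.lt_or_ge q.2.2.val 5 with hk | hk
    · have b1 : y q.1 ≤ y 2 := mono_le hmono (by omega)
      have b2 : y q.2.1 ≤ y 3 := mono_le hmono (by omega)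
      have b3 : y q.2.2 ≤ y 4 := mono_le hmono (by omega)
      have b4 : y 3 ≤ y 5 := mono_le hmono (by omega)
      linarith
    rcases Nat.lt_or_ge q.2.1.val 4 with hj | hj
    · have b1 : y q.1 ≤ y 2 := mono_le hmono (by omega)
      have b2 : y q.2.1 ≤ y 3 := mono_le hmono (by omega)
      have b3 : y q.2.2 ≤ y 5 := mono_le hmono (by omega)
      have b4 : y 3 ≤ y 4 := mono_le hmono (by omega)
      linarith
    rcases Nat.lt_or_ge q.1.val 3 with hi | hi
    · have b1 : y q.1 ≤ y 2 := mono_le hmono (by omega)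
      have b2 : y q.2.1 ≤ y 4 := mono_le hmono (by omega)
      have b3 : y q.2.2 ≤ y 5 := mono_le hmono (by omega)
      linarith
    · have : q = ((3:Fin 6), (4:Fin 6), (5:Fin 6)) := by
        refine Prod.ext (Fin.ext ?_) (Prod.ext (Fin.ext ?_) (Fin.ext ?_)) <;>
          simp <;> omega
      simp [this]
  have := Finset.card_le_card hsub
  simp at this
  omega

include hNe hAP3 hmono hL in
private lemma kill34 : y 3 ≠ y 4 := by
  classical
  intro h
  set v := y 0 + y 1 + y 3 with hv
  have hcnt : 2 ≤ (ML n m a).count v := by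
    rw [hL, cntR_eq]
    refine two_le_card_finset (u1 := ((0:Fin 6), (1:Fin 6), (3:Fin 6)))
      (u2 := ((0:Fin 6), (1:Fin 6), (4:Fin 6))) (by decide) ?_ ?_
    · exact Finset.mem_filter.2 ⟨(mem_S6 _).2 (by decide), by simp only [hv]⟩
    · exact Finset.mem_filter.2 ⟨(mem_S6 _).2 (by decide), by simp only; rw [hv, h]⟩
  have hbelow := (claimC hNe hAP3 hcnt).2
  rw [hL, cardR] at hbelow
  have hsub : (S6.filter (fun q => y q.1 + y q.2.1 + y q.2.2 < v)) ⊆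
      {((0:Fin 6), (1:Fin 6), (2:Fin 6))} := by
    intro q hq
    obtain ⟨hq1, hq2⟩ := Finset.mem_filter.1 hq
    obtain ⟨hij, hjk⟩ := (mem_S6 _).1 hq1
    rw [Fin.lt_def] at hij hjk
    have hq2 : _ := hq2
    rcases Nat.lt_or_ge 2 q.2.2.val with hk | hk
    · -- q.2.2 ≥ 3 : sum ≥ y0+y1+y3 = v, contradiction
      have b1 : y 0 ≤ y q.1 := mono_le hmono (by omega)
      have b2 : y 1 ≤ y q.2.1 := mono_le hmono (by omega)
      have b3 : y 3 ≤ y q.2.2 := mono_le hmono (by omega)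
      linarith
    · have : q = ((0:Fin 6), (1:Fin 6), (2:Fin 6)) := by
        refine Prod.ext (Fin.ext ?_) (Prod.ext (Fin.ext ?_) (Fin.ext ?_)) <;>
          simp <;> omega
      simp [this]
  have := Finset.card_le_card hsub
  simp at this
  omega

end Kills

private lemma cardL (n m : ℝ) (a : Fin 4 → ℝ) (p : ℝ → Prop) [DecidablePred p] :
    Multiset.card ((ML n m a).filter p) =
      (S4.filter (fun q => p (a q.1 + a q.2 + m))).card
        + (S4.filter (fun q => p (2 * n - (a q.1 + a q.2) + m))).card := by
  rw [ML, Multiset.filter_add, Multiset.card_add, Multiset.filter_map, Multiset.filter_map,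
    Multiset.card_map, Multiset.card_map]
  simp [Finset.card, Finset.filter_val, Function.comp]

private lemma fin6_eq4 : ∀ k : Fin 6, k.val = 4 → k = 4 := by decide
private lemma fin6_eq5 : ∀ k : Fin 6, k.val = 5 → k = 5 := by decide
private lemma fin6_lt4 : ∀ k : Fin 6, k.val ≤ 3 → k < 4 := by decide
private lemma fin6_lt5 : ∀ k : Fin 6, k.val ≤ 3 → k < 5 := by decide

private def OD4 : Finset (Fin 4 × Fin 4) := Finset.univ.filter (fun p => p.1 < p.2)

private def TW : Finset (Fin 6 × Fin 6 × Fin 6) :=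
  S6.filter (fun q => q.2.1.val ≤ 3 ∧ 4 ≤ q.2.2.val)

private lemma OD4_card : OD4.card = 6 := by decide

set_option maxRecDepth 10000 in
private lemma TW_card : TW.card = 12 := by decide

section Stage2

variable {n m : ℝ} {a : Fin 4 → ℝ} {y : Fin 6 → ℝ}
variable (hNe : ∀ w1 w2 : Fin 4 ⊕ Fin 4, w1 ≠ w2 → El n a w1 ≠ El n a w2)
variable (hAP3 : ∀ w1 w2 w3 : Fin 4 ⊕ Fin 4, w1 ≠ w2 → w1 ≠ w3 → w2 ≠ w3 →
  El n a w1 + El n a w2 ≠ 2 * El n a w3)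
variable (hmono : Monotone y) (hL : ML n m a = MR y) (h45 : y 4 = y 5)

include hNe hAP3 hmono hL h45 in
private lemma stage2 :
    (∀ i j : Fin 4, i ≠ j → 2 ≤ (ML n m a).count (a i + a j + m)) ∧
    (∀ i j : Fin 4, i ≠ j → 2 ≤ (ML n m a).count (2 * n - (a i + a j) + m)) ∧
    (∀ q : Fin 6 × Fin 6 × Fin 6, q ∈ S6 →
      2 ≤ (ML n m a).count (y q.1 + y q.2.1 + y q.2.2) → q.2.1.val ≤ 3 ∧ 4 ≤ q.2.2.val) := by
  classical
  set pr : ℝ → Prop := fun u => 2 ≤ (ML n m a).count u with hpr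
  -- subset facts
  have hsubA : S4.filter (fun q => pr (a q.1 + a q.2 + m)) ⊆ OD4 := by
    intro p hp
    obtain ⟨hp1, hp2⟩ := Finset.mem_filter.1 hp
    have hle := (mem_S4 p).1 hp1
    rcases lt_or_eq_of_le hle with hlt | heq
    · exact Finset.mem_filter.2 ⟨Finset.mem_univ _, hlt⟩
    · exfalso
      rw [hpr] at hp2
      have hd := diag_count_A hNe hAP3 (n := n) (m := m) p.1
      rw [show a p.1 + a p.2 + m = 2 * a p.1 + m by rw [← heq]; ring] at hp2
      omega
  have hsubB : S4.filter (fun q => pr (2 * n - (a q.1 + a q.2) + m)) ⊆ OD4 := by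
    intro p hp
    obtain ⟨hp1, hp2⟩ := Finset.mem_filter.1 hp
    have hle := (mem_S4 p).1 hp1
    rcases lt_or_eq_of_le hle with hlt | heq
    · exact Finset.mem_filter.2 ⟨Finset.mem_univ _, hlt⟩
    · exfalso
      rw [hpr] at hp2
      have hd := diag_count_B hNe hAP3 (n := n) (m := m) p.1
      rw [show 2 * n - (a p.1 + a p.2) + m = 2 * (n - a p.1) + m by rw [← heq]; ring] at hp2
      omega
  -- lower bound through TW
  have hTWsub : TW ⊆ S6.filter (fun q => pr (y q.1 + y q.2.1 + y q.2.2)) := by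
    intro q hq
    obtain ⟨hq1, hq2, hq3⟩ := Finset.mem_filter.1 hq |>.imp id (fun h => h)
    have hq1' := hq1
    obtain ⟨hij, hjk⟩ := (mem_S6 _).1 hq1
    refine Finset.mem_filter.2 ⟨hq1, ?_⟩
    show 2 ≤ (ML n m a).count (y q.1 + y q.2.1 + y q.2.2)
    rw [hL, cntR_eq]
    have hjlt4 : q.2.1 < (4 : Fin 6) := fin6_lt4 _ hq2
    have hilt : q.1 < q.2.1 := hij
    have hyk : y q.2.2 = y 4 := by
      have h5 := q.2.2.isLt
      rcases Nat.lt_or_ge q.2.2.val 5 with h | h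
      · have : q.2.2 = (4 : Fin 6) := fin6_eq4 _ (by omega)
        rw [this]
      · have : q.2.2 = (5 : Fin 6) := fin6_eq5 _ (by omega)
        rw [this, ← h45]
    refine two_le_card_finset (u1 := (q.1, q.2.1, (4 : Fin 6)))
      (u2 := (q.1, q.2.1, (5 : Fin 6))) ?_ ?_ ?_
    · simp [Prod.ext_iff]
    · refine Finset.mem_filter.2 ⟨(mem_S6 _).2 ⟨hilt, hjlt4⟩, ?_⟩
      show y q.1 + y q.2.1 + y q.2.2 = y q.1 + y q.2.1 + y 4
      rw [hyk]
    · refine Finset.mem_filter.2 ⟨(mem_S6 _).2 ⟨hilt, fin6_lt5 _ hq2⟩, ?_⟩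
      show y q.1 + y q.2.1 + y q.2.2 = y q.1 + y q.2.1 + y 5
      rw [hyk, h45]
  -- cardinality chain
  have hfil : ∀ M N : Multiset ℝ, M = N →
      Multiset.card (M.filter pr) = Multiset.card (N.filter pr) := by
    intro M N h; rw [h]
  have hchain : Multiset.card ((ML n m a).filter pr) =
      (S6.filter (fun q => pr (y q.1 + y q.2.1 + y q.2.2))).card :=
    (hfil _ _ hL).trans (cardR y pr)
  have hup : Multiset.card ((ML n m a).filter pr) ≤ 12 := by
    rw [cardL]
    have h1 := Finset.card_le_card hsubA
    have h2 := Finset.card_le_card hsubB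
    rw [OD4_card] at h1 h2
    omega
  have hdown : 12 ≤ (S6.filter (fun q => pr (y q.1 + y q.2.1 + y q.2.2))).card := by
    have := Finset.card_le_card hTWsub
    rw [TW_card] at this
    exact this
  have hAeq : S4.filter (fun q => pr (a q.1 + a q.2 + m)) = OD4 := by
    apply Finset.eq_of_subset_of_card_le hsubA
    rw [OD4_card]
    have := cardL n m a pr
    have h2 := Finset.card_le_card hsubB
    rw [OD4_card] at h2
    omega
  have hBeq : S4.filter (fun q => pr (2 * n - (a q.1 + a q.2) + m)) = OD4 := by
    apply Finset.eq_of_subset_of_card_le hsubB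
    rw [OD4_card]
    have := cardL n m a pr
    have h1 := Finset.card_le_card hsubA
    rw [OD4_card] at h1
    omega
  have hReq : S6.filter (fun q => pr (y q.1 + y q.2.1 + y q.2.2)) = TW := by
    symm
    apply Finset.eq_of_subset_of_card_le hTWsub
    rw [TW_card]
    omega
  refine ⟨?_, ?_, ?_⟩
  · intro i j hij
    rcases lt_or_gt_of_ne hij with h | h
    · have : (i, j) ∈ OD4 := Finset.mem_filter.2 ⟨Finset.mem_univ _, h⟩
      rw [← hAeq] at this
      exact (Finset.mem_filter.1 this).2
    · have : (j, i) ∈ OD4 := Finset.mem_filter.2 ⟨Finset.mem_univ _, h⟩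
      rw [← hAeq] at this
      have h2 := (Finset.mem_filter.1 this).2
      rw [show a i + a j + m = a j + a i + m by ring]
      exact h2
  · intro i j hij
    rcases lt_or_gt_of_ne hij with h | h
    · have : (i, j) ∈ OD4 := Finset.mem_filter.2 ⟨Finset.mem_univ _, h⟩
      rw [← hBeq] at this
      exact (Finset.mem_filter.1 this).2
    · have : (j, i) ∈ OD4 := Finset.mem_filter.2 ⟨Finset.mem_univ _, h⟩
      rw [← hBeq] at this
      have h2 := (Finset.mem_filter.1 this).2
      rw [show 2 * n - (a i + a j) + m = 2 * n - (a j + a i) + m by ring]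
      exact h2
  · intro q hq hcnt
    have : q ∈ S6.filter (fun q => pr (y q.1 + y q.2.1 + y q.2.2)) :=
      Finset.mem_filter.2 ⟨hq, hcnt⟩
    rw [hReq] at this
    exact (Finset.mem_filter.1 this).2

end Stage2

private lemma sum4' (a : Fin 4 → ℝ) {i j k l : Fin 4} (h1 : i ≠ j) (h2 : i ≠ k) (h3 : i ≠ l)
    (h4 : j ≠ k) (h5 : j ≠ l) (h6 : k ≠ l) :
    a i + a j + a k + a l = a 0 + a 1 + a 2 + a 3 := by
  have hset : ({i, j, k, l} : Finset (Fin 4)) = Finset.univ := by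
    apply Finset.eq_univ_of_card
    rw [show Fintype.card (Fin 4) = 4 from rfl]
    rw [Finset.card_insert_of_notMem (by simp [h1, h2, h3]),
      Finset.card_insert_of_notMem (by simp [h4, h5]),
      Finset.card_insert_of_notMem (by simp [h6]), Finset.card_singleton]
  have hsum := congrArg (fun s : Finset (Fin 4) => s.sum a) hset
  rw [Finset.sum_insert (by simp [h1, h2, h3]), Finset.sum_insert (by simp [h4, h5]),
    Finset.sum_insert (by simp [h6]), Finset.sum_singleton, Fin.sum_univ_four] at hsum
  linarith

private lemma fin4_pair23 : ∀ k l : Fin 4, k ≠ 0 → k ≠ 1 → l ≠ 0 → l ≠ 1 → k < l →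
    k = 2 ∧ l = 3 := by decide
private lemma fin4_pair13 : ∀ k l : Fin 4, k ≠ 0 → k ≠ 2 → l ≠ 0 → l ≠ 2 → k < l →
    k = 1 ∧ l = 3 := by decide

section S2N

variable {n m : ℝ} {a : Fin 4 → ℝ}
variable (hNe : ∀ w1 w2 : Fin 4 ⊕ Fin 4, w1 ≠ w2 → El n a w1 ≠ El n a w2)
variable (hAP3 : ∀ w1 w2 w3 : Fin 4 ⊕ Fin 4, w1 ≠ w2 → w1 ≠ w3 → w2 ≠ w3 →
  El n a w1 + El n a w2 ≠ 2 * El n a w3)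

include hNe hAP3 in
/-- a cross representation `a i + a j = 2n - (a k + a l)` forces {k,l} disjoint from {i,j} -/
private lemma crossrep {i j k l : Fin 4} (hij : i < j) (hkl : k ≤ l)
    (h : (a i + a j) + (a k + a l) = 2 * n) :
    k ≠ i ∧ k ≠ j ∧ l ≠ i ∧ l ≠ j ∧ k < l := by
  have hijne := ne_of_lt hij
  have hkl' : k < l := by
    rcases lt_or_eq_of_le hkl with h' | h'
    · exact h'
    · subst h'
      exact (Paab hAP3 i j k hijne (by linarith)).elim
  refine ⟨?_, ?_, ?_, ?_, hkl'⟩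
  · rintro rfl  -- k = i
    rcases eq_or_ne j l with rfl | hjl
    · exact Hab hNe k j (by linarith)
    · exact Paab hAP3 j l k hjl (by linarith)
  · rintro rfl  -- k = j
    rcases eq_or_ne i l with rfl | hil
    · exact Hab hNe i k (by linarith)
    · exact Paab hAP3 i l k hil (by linarith)
  · rintro rfl  -- l = i
    have hjk : j ≠ k := fun hc => (lt_irrefl _ ((hc ▸ hkl').trans hij)).elim
    exact Paab hAP3 j k l hjk (by linarith)
  · rintro rfl  -- l = j
    rcases eq_or_ne i k with rfl | hik
    · exact Hab hNe i l (by linarith)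
    · exact Paab hAP3 i k l hik (by linarith)

include hNe hAP3 in
private lemma pairing_of_two {i j : Fin 4} (hij : i < j)
    (hcnt : 2 ≤ (ML n m a).count (a i + a j + m)) :
    (a i + a j = 2 * n - (a i + a j)) ∨
    (∃ k l : Fin 4, k ≠ i ∧ k ≠ j ∧ l ≠ i ∧ l ≠ j ∧ k < l ∧ a i + a j = a k + a l) ∨
    a 0 + a 1 + a 2 + a 3 = 2 * n := by
  have mainA : ∀ p : Fin 4 × Fin 4, p.1 ≤ p.2 → p ≠ (i, j) →
      a i + a j + m = a p.1 + a p.2 + m →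
      ∃ k l : Fin 4, k ≠ i ∧ k ≠ j ∧ l ≠ i ∧ l ≠ j ∧ k < l ∧ a i + a j = a k + a l := by
    intro p hp hpne hval
    rcases lt_or_eq_of_le hp with hp' | hp'
    · obtain ⟨d1, d2, d3, d4⟩ := disjointA (Haa hNe) hij hp' (by linarith) (Ne.symm hpne)
      exact ⟨p.1, p.2, Ne.symm d1, Ne.symm d3, Ne.symm d2, Ne.symm d4, hp', by linarith⟩
    · exact (killAdiagA hNe hAP3 (i := p.1) hij (by rw [← hp'] at hval; linarith)).elim
  have mainB : ∀ p : Fin 4 × Fin 4, p.1 ≤ p.2 →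
      a i + a j + m = 2 * n - (a p.1 + a p.2) + m →
      a 0 + a 1 + a 2 + a 3 = 2 * n := by
    intro p hp hval
    have hsum : (a i + a j) + (a p.1 + a p.2) = 2 * n := by linarith
    obtain ⟨d1, d2, d3, d4, hplt⟩ := crossrep hNe hAP3 hij hp hsum
    have h4 := sum4' a (ne_of_lt hij) (Ne.symm d1) (Ne.symm d3) (Ne.symm d2)
      (Ne.symm d4) (ne_of_lt hplt)
    linarith
  rcases count_two_reps hcnt with ⟨p, q, hp, hq, hpq, hvp, hvq⟩ | ⟨p, q, hp, hq, hpq, hvp, hvq⟩ |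
    ⟨p, q, hp, hq, hvp, hvq⟩
  · rcases eq_or_ne p (i, j) with rfl | hpne
    · exact Or.inr (Or.inl (mainA q hq (fun hc => hpq (hc.symm ▸ rfl)) hvq))
    · exact Or.inr (Or.inl (mainA p hp hpne hvp))
  · exact Or.inr (Or.inr (mainB p hp hvp))
  · exact Or.inr (Or.inr (mainB q hq hvq))

include hNe hAP3 in
private lemma s2n
    (HA : ∀ i j : Fin 4, i ≠ j → 2 ≤ (ML n m a).count (a i + a j + m)) :
    a 0 + a 1 + a 2 + a 3 = 2 * n := by
  have h01 := pairing_of_two hNe hAP3 (show (0:Fin 4) < 1 by decide) (HA 0 1 (by decide))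
  have h02 := pairing_of_two hNe hAP3 (show (0:Fin 4) < 2 by decide) (HA 0 2 (by decide))
  rcases h01 with h01 | h01 | h01
  · exact (Hab hNe 0 1 (by linarith)).elim
  swap
  · exact h01
  rcases h02 with h02 | h02 | h02
  · exact (Hab hNe 0 2 (by linarith)).elim
  swap
  · exact h02
  -- both within-pairings : contradiction
  obtain ⟨k, l, hk0, hk1, hl0, hl1, hkl, hval1⟩ := h01
  obtain ⟨k', l', hk0', hk2', hl0', hl2', hkl', hval2⟩ := h02
  -- k,l ∉ {0,1}, k<l ⟹ (k,l) = (2,3) ; k',l' ∉ {0,2}, k'<l' ⟹ (k',l') = (1,3)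
  have hkl23 : k = 2 ∧ l = 3 := fin4_pair23 k l hk0 hk1 hl0 hl1 hkl
  have hkl13 : k' = 1 ∧ l' = 3 := fin4_pair13 k' l' hk0' hk2' hl0' hl2' hkl'
  obtain ⟨rfl, rfl⟩ := hkl23
  obtain ⟨rfl, rfl⟩ := hkl13
  exact (Haa hNe 1 2 (by decide) (by linarith)).elim

end S2N

private lemma fin4_cases6 : ∀ k l : Fin 4, k < l →
    (k = 0 ∧ l = 1) ∨ (k = 0 ∧ l = 2) ∨ (k = 0 ∧ l = 3) ∨
    (k = 1 ∧ l = 2) ∨ (k = 1 ∧ l = 3) ∨ (k = 2 ∧ l = 3) := by decide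

private lemma compl4 {n : ℝ} {a : Fin 4 → ℝ} (hs : a 0 + a 1 + a 2 + a 3 = 2 * n) :
    ∀ i j : Fin 4, i < j → ∃ p q : Fin 4, p ≠ q ∧ a p + a q = 2 * n - (a i + a j) := by
  intro i j hij
  rcases fin4_cases6 i j hij with ⟨rfl, rfl⟩ | ⟨rfl, rfl⟩ | ⟨rfl, rfl⟩ | ⟨rfl, rfl⟩ |
    ⟨rfl, rfl⟩ | ⟨rfl, rfl⟩
  · exact ⟨2, 3, by decide, by linarith⟩
  · exact ⟨1, 3, by decide, by linarith⟩
  · exact ⟨1, 2, by decide, by linarith⟩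
  · exact ⟨0, 3, by decide, by linarith⟩
  · exact ⟨0, 2, by decide, by linarith⟩
  · exact ⟨0, 1, by decide, by linarith⟩


private lemma elim8 (b : Fin 4 → ℝ) (nn : ℝ) (w : Fin 4 ⊕ Fin 4) (v : ℝ)
    (h : v = 2 * El nn b w) :
    v = 2*b 0 ∨ v = 2*b 1 ∨ v = 2*b 2 ∨ v = 2*b 3 ∨
    v = 2*(nn - b 0) ∨ v = 2*(nn - b 1) ∨ v = 2*(nn - b 2) ∨ v = 2*(nn - b 3) := by
  rcases w with i | i <;> fin_cases i <;> simp_all <;> tauto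

private lemma FIN0 (b : Fin 4 → ℝ) (nn e : ℝ)
    (h01 : b 0 < b 1) (h12 : b 1 < b 2) (h23 : b 2 < b 3)
    (hsum : b 0 + b 1 + b 2 + b 3 = 2*nn)
    (hbe : b 3 < e)
    (hNe : ∀ w1 w2 : Fin 4 ⊕ Fin 4, w1 ≠ w2 →
      El nn b w1 ≠ El nn b w2)
    (hAP : ∀ w1 w2 w3 : Fin 4 ⊕ Fin 4, w1 ≠ w2 → w1 ≠ w3 → w2 ≠ w3 →
      El nn b w1 + El nn b w2 ≠
        2 * El nn b w3)
    (hw : ∀ l : Fin 4, ∃ w : Fin 4 ⊕ Fin 4, b l + e = 2 * El nn b w) :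
    False := by
  obtain ⟨w0, hw0⟩ := hw 0
  obtain ⟨w1, hw1⟩ := hw 1
  obtain ⟨w2, hw2⟩ := hw 2
  obtain ⟨w3, hw3⟩ := hw 3
  rcases elim8 b nn (w0) (b 0 + e) hw0 with h0|h0|h0|h0|h0|h0|h0|h0
  · -- b0 + e = 2*b 0
    linarith
  · -- b0 + e = 2*b 1
    rcases elim8 b nn (w1) (b 1 + e) hw1 with h1|h1|h1|h1|h1|h1|h1|h1
    · -- b1 + e = 2*b 0
      linarith
    · -- b1 + e = 2*b 1
      linarith
    · -- b1 + e = 2*b 2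
      rcases elim8 b nn (w2) (b 2 + e) hw2 with h2|h2|h2|h2|h2|h2|h2|h2
      · -- b2 + e = 2*b 0
        linarith
      · -- b2 + e = 2*b 1
        linarith
      · -- b2 + e = 2*b 2
        linarith
      · -- b2 + e = 2*b 3
        rcases elim8 b nn (w3) (b 3 + e) hw3 with h3|h3|h3|h3|h3|h3|h3|h3
        · -- b3 + e = 2*b 0
          linarith
        · -- b3 + e = 2*b 1
          linarith
        · -- b3 + e = 2*b 2
          linarith
        · -- b3 + e = 2*b 3
          linarith
        · -- b3 + e = 2*(nn - b 0)
          linarith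
        · -- b3 + e = 2*(nn - b 1)
          linarith
        · -- b3 + e = 2*(nn - b 2)
          linarith
        · -- b3 + e = 2*(nn - b 3)
          linarith
      · -- b2 + e = 2*(nn - b 0)
        linarith
      · -- b2 + e = 2*(nn - b 1)
        linarith
      · -- b2 + e = 2*(nn - b 2)
        linarith
      · -- b2 + e = 2*(nn - b 3)
        linarith
    · -- b1 + e = 2*b 3
      rcases elim8 b nn (w2) (b 2 + e) hw2 with h2|h2|h2|h2|h2|h2|h2|h2
      · -- b2 + e = 2*b 0
        linarith
      · -- b2 + e = 2*b 1
        linarith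
      · -- b2 + e = 2*b 2
        linarith
      · -- b2 + e = 2*b 3
        linarith
      · -- b2 + e = 2*(nn - b 0)
        linarith
      · -- b2 + e = 2*(nn - b 1)
        linarith
      · -- b2 + e = 2*(nn - b 2)
        linarith
      · -- b2 + e = 2*(nn - b 3)
        linarith
    · -- b1 + e = 2*(nn - b 0)
      linarith
    · -- b1 + e = 2*(nn - b 1)
      linarith
    · -- b1 + e = 2*(nn - b 2)
      linarith
    · -- b1 + e = 2*(nn - b 3)
      linarith
  · -- b0 + e = 2*b 2
    rcases elim8 b nn (w1) (b 1 + e) hw1 with h1|h1|h1|h1|h1|h1|h1|h1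
    · -- b1 + e = 2*b 0
      linarith
    · -- b1 + e = 2*b 1
      linarith
    · -- b1 + e = 2*b 2
      linarith
    · -- b1 + e = 2*b 3
      rcases elim8 b nn (w2) (b 2 + e) hw2 with h2|h2|h2|h2|h2|h2|h2|h2
      · -- b2 + e = 2*b 0
        linarith
      · -- b2 + e = 2*b 1
        linarith
      · -- b2 + e = 2*b 2
        linarith
      · -- b2 + e = 2*b 3
        linarith
      · -- b2 + e = 2*(nn - b 0)
        exact hAP (Sum.inl 0) (Sum.inl 2) (Sum.inr 2) (by decide) (by decide) (by decide) (by show b 0 + b 2 = 2 * (nn - b 2); linarith)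
      · -- b2 + e = 2*(nn - b 1)
        linarith
      · -- b2 + e = 2*(nn - b 2)
        linarith
      · -- b2 + e = 2*(nn - b 3)
        linarith
    · -- b1 + e = 2*(nn - b 0)
      linarith
    · -- b1 + e = 2*(nn - b 1)
      rcases elim8 b nn (w2) (b 2 + e) hw2 with h2|h2|h2|h2|h2|h2|h2|h2
      · -- b2 + e = 2*b 0
        linarith
      · -- b2 + e = 2*b 1
        linarith
      · -- b2 + e = 2*b 2
        linarith
      · -- b2 + e = 2*b 3
        rcases elim8 b nn (w3) (b 3 + e) hw3 with h3|h3|h3|h3|h3|h3|h3|h3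
        · -- b3 + e = 2*b 0
          linarith
        · -- b3 + e = 2*b 1
          linarith
        · -- b3 + e = 2*b 2
          linarith
        · -- b3 + e = 2*b 3
          linarith
        · -- b3 + e = 2*(nn - b 0)
          linarith
        · -- b3 + e = 2*(nn - b 1)
          linarith
        · -- b3 + e = 2*(nn - b 2)
          linarith
        · -- b3 + e = 2*(nn - b 3)
          linarith
      · -- b2 + e = 2*(nn - b 0)
        exact hAP (Sum.inl 0) (Sum.inl 2) (Sum.inr 2) (by decide) (by decide) (by decide) (by show b 0 + b 2 = 2 * (nn - b 2); linarith)
      · -- b2 + e = 2*(nn - b 1)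
        linarith
      · -- b2 + e = 2*(nn - b 2)
        linarith
      · -- b2 + e = 2*(nn - b 3)
        linarith
    · -- b1 + e = 2*(nn - b 2)
      linarith
    · -- b1 + e = 2*(nn - b 3)
      linarith
  · -- b0 + e = 2*b 3
    rcases elim8 b nn (w1) (b 1 + e) hw1 with h1|h1|h1|h1|h1|h1|h1|h1
    · -- b1 + e = 2*b 0
      linarith
    · -- b1 + e = 2*b 1
      linarith
    · -- b1 + e = 2*b 2
      linarith
    · -- b1 + e = 2*b 3
      linarith
    · -- b1 + e = 2*(nn - b 0)
      linarith
    · -- b1 + e = 2*(nn - b 1)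
      linarith
    · -- b1 + e = 2*(nn - b 2)
      linarith
    · -- b1 + e = 2*(nn - b 3)
      linarith
  · -- b0 + e = 2*(nn - b 0)
    rcases elim8 b nn (w1) (b 1 + e) hw1 with h1|h1|h1|h1|h1|h1|h1|h1
    · -- b1 + e = 2*b 0
      linarith
    · -- b1 + e = 2*b 1
      linarith
    · -- b1 + e = 2*b 2
      linarith
    · -- b1 + e = 2*b 3
      rcases elim8 b nn (w2) (b 2 + e) hw2 with h2|h2|h2|h2|h2|h2|h2|h2
      · -- b2 + e = 2*b 0
        linarith
      · -- b2 + e = 2*b 1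
        linarith
      · -- b2 + e = 2*b 2
        linarith
      · -- b2 + e = 2*b 3
        linarith
      · -- b2 + e = 2*(nn - b 0)
        linarith
      · -- b2 + e = 2*(nn - b 1)
        linarith
      · -- b2 + e = 2*(nn - b 2)
        linarith
      · -- b2 + e = 2*(nn - b 3)
        linarith
    · -- b1 + e = 2*(nn - b 0)
      linarith
    · -- b1 + e = 2*(nn - b 1)
      linarith
    · -- b1 + e = 2*(nn - b 2)
      linarith
    · -- b1 + e = 2*(nn - b 3)
      linarith
  · -- b0 + e = 2*(nn - b 1)
    rcases elim8 b nn (w1) (b 1 + e) hw1 with h1|h1|h1|h1|h1|h1|h1|h1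
    · -- b1 + e = 2*b 0
      linarith
    · -- b1 + e = 2*b 1
      linarith
    · -- b1 + e = 2*b 2
      linarith
    · -- b1 + e = 2*b 3
      linarith
    · -- b1 + e = 2*(nn - b 0)
      linarith
    · -- b1 + e = 2*(nn - b 1)
      linarith
    · -- b1 + e = 2*(nn - b 2)
      linarith
    · -- b1 + e = 2*(nn - b 3)
      linarith
  · -- b0 + e = 2*(nn - b 2)
    linarith
  · -- b0 + e = 2*(nn - b 3)
    linarith
set_option maxHeartbeats 1000000 in
private lemma top (n m : ℝ) (a : Fin 4 → ℝ) (y : Fin 6 → ℝ)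
    (hNe : ∀ w1 w2 : Fin 4 ⊕ Fin 4, w1 ≠ w2 → El n a w1 ≠ El n a w2)
    (hAP3 : ∀ w1 w2 w3 : Fin 4 ⊕ Fin 4, w1 ≠ w2 → w1 ≠ w3 → w2 ≠ w3 →
      El n a w1 + El n a w2 ≠ 2 * El n a w3)
    (hmono : Monotone y) (hL : ML n m a = MR y) (h45 : y 4 = y 5) : False := by
  classical
  obtain ⟨HA, HB, HR⟩ := stage2 hNe hAP3 hmono hL h45
  have k12 : y 1 < y 2 :=
    lt_of_le_of_ne (mono_le hmono (by decide)) (kill12 hNe hAP3 hmono hL)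
  have k23 : y 2 < y 3 :=
    lt_of_le_of_ne (mono_le hmono (by decide)) (kill23 hNe hAP3 hmono hL)
  have k34 : y 3 < y 4 :=
    lt_of_le_of_ne (mono_le hmono (by decide)) (kill34 hNe hAP3 hmono hL)
  have k01 : y 0 < y 1 := by
    rcases lt_or_eq_of_le (mono_le hmono (show (0:Fin 6).val ≤ (1:Fin 6).val by decide))
      with h | h
    · exact h
    · exfalso
      have hq : ((0:Fin 6), (2:Fin 6), (3:Fin 6)) ∈ S6 := (mem_S6 _).2 (by decide)
      have hcnt : 2 ≤ (ML n m a).count (y 0 + y 2 + y 3) := by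
        rw [hL, cntR_eq]
        refine two_le_card_finset (u1 := ((0:Fin 6), (2:Fin 6), (3:Fin 6)))
          (u2 := ((1:Fin 6), (2:Fin 6), (3:Fin 6))) (by decide) ?_ ?_
        · exact Finset.mem_filter.2 ⟨hq, rfl⟩
        · exact Finset.mem_filter.2 ⟨(mem_S6 _).2 (by decide),
            by show y 0 + y 2 + y 3 = y 1 + y 2 + y 3; rw [h]⟩
      exact absurd (HR _ hq hcnt).2 (by decide)
  -- the shifted lower values z and the shift e
  set t := y 4 with ht
  set e := (3 * t - m) / 2 with he
  set z : Fin 4 → ℝ := fun l => y (Fin.castLE (by norm_num) l) + (t - m) / 2 with hzdef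
  have hzval : ∀ l : Fin 4, z l = y (Fin.castLE (by norm_num) l) + (t - m) / 2 := fun l => rfl
  have hz0 : z 0 = y 0 + (t - m) / 2 := rfl
  have hz1 : z 1 = y 1 + (t - m) / 2 := rfl
  have hz2 : z 2 = y 2 + (t - m) / 2 := rfl
  have hz3 : z 3 = y 3 + (t - m) / 2 := rfl
  have zmono : ∀ u w : Fin 4, u.val ≤ w.val → z u ≤ z w := by
    intro u w h
    have := mono_le hmono (i := Fin.castLE (by norm_num) u) (j := Fin.castLE (by norm_num) w)
      (by simpa using h)
    rw [hzval, hzval]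
    linarith
  have zs01 : z 0 < z 1 := by rw [hz0, hz1]; linarith
  have zs12 : z 1 < z 2 := by rw [hz1, hz2]; linarith
  have zs23 : z 2 < z 3 := by rw [hz2, hz3]; linarith
  -- mem1 : values b p + b q are among the doubled z-pair values
  have mem1 : ∀ p q : Fin 4, p ≠ q → ∃ k l : Fin 4, k < l ∧ a p + a q = z k + z l := by
    intro p q hpq
    have hcnt : 2 ≤ (ML n m a).count (a p + a q + m) := HA p q hpq
    have hmem : (a p + a q + m) ∈ MR y := by
      rw [← hL]
      exact Multiset.count_pos.1 (by omega)
    obtain ⟨r, ⟨hr1, hr2⟩, hrv⟩ := mem_MR hmem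
    have hr : r ∈ S6 := (mem_S6 r).2 ⟨hr1, hr2⟩
    obtain ⟨hj3, hk4⟩ := HR r hr (by rw [← hrv]; exact hcnt)
    have hr1' := Fin.lt_def.1 hr1
    have hr2' := Fin.lt_def.1 hr2
    have hk6 := r.2.2.isLt
    refine ⟨⟨r.1.val, by omega⟩, ⟨r.2.1.val, by omega⟩, by
      rw [Fin.lt_def]; exact hr1', ?_⟩
    have hyk : y r.2.2 = t := by
      rcases Nat.lt_or_ge r.2.2.val 5 with h | h
      · rw [fin6_eq4 r.2.2 (by omega), ← ht]
      · rw [fin6_eq5 r.2.2 (by omega), ← h45]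
    have hc1 : Fin.castLE (show 4 ≤ 6 by norm_num) (⟨r.1.val, by omega⟩ : Fin 4) = r.1 :=
      Fin.ext rfl
    have hc2 : Fin.castLE (show 4 ≤ 6 by norm_num) (⟨r.2.1.val, by omega⟩ : Fin 4) = r.2.1 :=
      Fin.ext rfl
    rw [hzval, hzval, hc1, hc2]
    rw [hyk] at hrv
    linarith
  -- s = 2n
  have hs : a 0 + a 1 + a 2 + a 3 = 2 * n := s2n hNe hAP3 HA
  -- mem2 : doubled z-values are a-pair values
  have mem2 : ∀ k l : Fin 4, k < l → ∃ p q : Fin 4, p ≠ q ∧ z k + z l = a p + a q := by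
    intro k l hkl
    set k' := Fin.castLE (show 4 ≤ 6 by norm_num) k with hk'
    set l' := Fin.castLE (show 4 ≤ 6 by norm_num) l with hl'
    have hk'l' : k' < l' := by rw [Fin.lt_def]; exact Fin.lt_def.1 hkl
    have hl'4 : l' < (4:Fin 6) := fin6_lt4 _ (by have := l.isLt; simp [hl']; omega)
    have hl'5 : l' < (5:Fin 6) := fin6_lt5 _ (by have := l.isLt; simp [hl']; omega)
    have hcnt2 : 2 ≤ (ML n m a).count (y k' + y l' + t) := by
      rw [hL, cntR_eq]
      refine two_le_card_finset (u1 := (k', l', (4:Fin 6))) (u2 := (k', l', (5:Fin 6)))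
        (by simp [Prod.ext_iff]) ?_ ?_
      · exact Finset.mem_filter.2 ⟨(mem_S6 _).2 ⟨hk'l', hl'4⟩,
          by show y k' + y l' + t = y k' + y l' + y 4; linarith [ht]⟩
      · exact Finset.mem_filter.2 ⟨(mem_S6 _).2 ⟨hk'l', hl'5⟩,
          by show y k' + y l' + t = y k' + y l' + y 5; linarith [ht, h45]⟩
    have hmem2 : (y k' + y l' + t) ∈ ML n m a := Multiset.count_pos.1 (by omega)
    rcases mem_ML hmem2 with ⟨p', hple, hpv⟩ | ⟨p', hple, hpv⟩
    · rcases lt_or_eq_of_le hple with hp' | hp'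
      · exact ⟨p'.1, p'.2, ne_of_lt hp', by rw [hzval, hzval, ← hk', ← hl']; linarith⟩
      · exfalso
        have hd := diag_count_A hNe hAP3 (n := n) (m := m) p'.1
        rw [show y k' + y l' + t = 2 * a p'.1 + m by rw [← hp'] at hpv; linarith] at hcnt2
        omega
    · rcases lt_or_eq_of_le hple with hp' | hp'
      · obtain ⟨p, q, hpnq, hcval⟩ := compl4 hs p'.1 p'.2 hp'
        exact ⟨p, q, hpnq, by rw [hzval, hzval, ← hk', ← hl']; linarith⟩
      · exfalso
        have hd := diag_count_B hNe hAP3 (n := n) (m := m) p'.1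
        rw [show y k' + y l' + t = 2 * (n - a p'.1) + m by rw [← hp'] at hpv; linarith] at hcnt2
        omega
  -- sort a
  set σ := Tuple.sort a with hσ
  set b : Fin 4 → ℝ := a ∘ ⇑σ with hb
  have hbmono : Monotone b := Tuple.monotone_sort a
  have hainj : Function.Injective a := by
    intro i j h
    by_contra hc
    exact Haa hNe i j hc h
  have hbstrict : StrictMono b := hbmono.strictMono_of_injective (hainj.comp σ.injective)
  have hb01 : b 0 < b 1 := hbstrict (by decide)
  have hb12 : b 1 < b 2 := hbstrict (by decide)
  have hb23 : b 2 < b 3 := hbstrict (by decide)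
  have hbval : ∀ i, b i = a (σ i) := fun _ => rfl
  have hsb : b 0 + b 1 + b 2 + b 3 = 2 * n := by
    have h4 := sum4' a (i := σ 0) (j := σ 1) (k := σ 2) (l := σ 3)
      (σ.injective.ne (by decide)) (σ.injective.ne (by decide)) (σ.injective.ne (by decide))
      (σ.injective.ne (by decide)) (σ.injective.ne (by decide)) (σ.injective.ne (by decide))
    rw [hbval, hbval, hbval, hbval]
    linarith
  have mem1b : ∀ p q : Fin 4, p ≠ q → ∃ k l : Fin 4, k < l ∧ b p + b q = z k + z l :=
    fun p q h => mem1 (σ p) (σ q) (fun hc => h (σ.injective hc))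
  have mem2b : ∀ k l : Fin 4, k < l → ∃ p q : Fin 4, p ≠ q ∧ z k + z l = b p + b q := by
    intro k l h
    obtain ⟨p, q, hpq, hv⟩ := mem2 k l h
    refine ⟨σ.symm p, σ.symm q, fun hc => hpq (by
      have := congrArg (⇑σ) hc
      rwa [σ.apply_symm_apply, σ.apply_symm_apply] at this), ?_⟩
    rw [hbval, hbval, σ.apply_symm_apply, σ.apply_symm_apply]
    exact hv
  -- bounds
  have bmax23 : ∀ p q : Fin 4, p ≠ q → b p + b q ≤ b 2 + b 3 := by
    have main : ∀ u v : Fin 4, u < v → b u + b v ≤ b 2 + b 3 := by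
      intro u v huv
      have h1 : b u ≤ b 2 := hbmono (Fin.le_def.2 (by
        have := Fin.lt_def.1 huv; have := v.isLt; show u.val ≤ 2; omega))
      have h2 : b v ≤ b 3 := hbmono (Fin.le_def.2 (by have := v.isLt; show v.val ≤ 3; omega))
      linarith
    intro p q h
    rcases lt_or_gt_of_ne h with h' | h'
    · exact main p q h'
    · linarith [main q p h']
  have bmin01 : ∀ p q : Fin 4, p ≠ q → b 0 + b 1 ≤ b p + b q := by
    have main : ∀ u v : Fin 4, u < v → b 0 + b 1 ≤ b u + b v := by
      intro u v huv
      have h1 : b 0 ≤ b u := hbmono (Fin.le_def.2 (by omega))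
      have h2 : b 1 ≤ b v := hbmono (Fin.le_def.2 (by
        have := Fin.lt_def.1 huv; show 1 ≤ v.val; omega))
      linarith
    intro p q h
    rcases lt_or_gt_of_ne h with h' | h'
    · exact main p q h'
    · linarith [main q p h']
  have zmax23 : ∀ k l : Fin 4, k < l → z k + z l ≤ z 2 + z 3 := by
    intro k l hkl
    have h1 : z k ≤ z 2 := zmono _ _ (by
      have := Fin.lt_def.1 hkl; have := l.isLt; show k.val ≤ (2:Fin 4).val; omega)
    have h2 : z l ≤ z 3 := zmono _ _ (by have := l.isLt; show l.val ≤ (3:Fin 4).val; omega)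
    linarith
  have zmin01 : ∀ k l : Fin 4, k < l → z 0 + z 1 ≤ z k + z l := by
    intro k l hkl
    have h1 : z 0 ≤ z k := zmono _ _ (by show (0:Fin 4).val ≤ k.val; omega)
    have h2 : z 1 ≤ z l := zmono _ _ (by
      have := Fin.lt_def.1 hkl; show (1:Fin 4).val ≤ l.val; omega)
    linarith
  -- the four corner equalities
  have e1 : b 2 + b 3 = z 2 + z 3 := by
    obtain ⟨k, l, hkl, hv⟩ := mem1b 2 3 (by decide)
    obtain ⟨p, q, hpq, hv2⟩ := mem2b 2 3 (by decide)
    have h1 := zmax23 k l hkl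
    have h2 := bmax23 p q hpq
    linarith
  have e3 : b 0 + b 1 = z 0 + z 1 := by
    obtain ⟨k, l, hkl, hv⟩ := mem1b 0 1 (by decide)
    obtain ⟨p, q, hpq, hv2⟩ := mem2b 0 1 (by decide)
    have h1 := zmin01 k l hkl
    have h2 := bmin01 p q hpq
    linarith
  have e2 : b 1 + b 3 = z 1 + z 3 := by
    obtain ⟨k, l, hkl, hv⟩ := mem1b 1 3 (by decide)
    obtain ⟨p, q, hpq, hv2⟩ := mem2b 1 3 (by decide)
    have hub : b 1 + b 3 ≤ z 1 + z 3 := by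
      rcases fin4_cases6 k l hkl with ⟨rfl, rfl⟩ | ⟨rfl, rfl⟩ | ⟨rfl, rfl⟩ | ⟨rfl, rfl⟩ |
        ⟨rfl, rfl⟩ | ⟨rfl, rfl⟩
      · linarith
      · linarith
      · linarith
      · linarith
      · linarith
      · exfalso; linarith [e1, hb12]
    have hlb : z 1 + z 3 ≤ b 1 + b 3 := by
      have main : ∀ u v : Fin 4, u < v → b p + b q = b u + b v → z 1 + z 3 ≤ b 1 + b 3 := by
        intro u v huv hval
        rcases fin4_cases6 u v huv with ⟨rfl, rfl⟩ | ⟨rfl, rfl⟩ | ⟨rfl, rfl⟩ | ⟨rfl, rfl⟩ |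
          ⟨rfl, rfl⟩ | ⟨rfl, rfl⟩
        · linarith
        · linarith
        · linarith
        · linarith
        · linarith
        · exfalso; linarith [e1, zs12]
      rcases lt_or_gt_of_ne hpq with h' | h'
      · exact main p q h' rfl
      · exact main q p h' (by ring)
    linarith
  have e4 : b 0 + b 2 = z 0 + z 2 := by
    obtain ⟨k, l, hkl, hv⟩ := mem1b 0 2 (by decide)
    obtain ⟨p, q, hpq, hv2⟩ := mem2b 0 2 (by decide)
    have hub : z 0 + z 2 ≤ b 0 + b 2 := by
      rcases fin4_cases6 k l hkl with ⟨rfl, rfl⟩ | ⟨rfl, rfl⟩ | ⟨rfl, rfl⟩ | ⟨rfl, rfl⟩ |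
        ⟨rfl, rfl⟩ | ⟨rfl, rfl⟩
      · exfalso; linarith [e3, hb12]
      · linarith
      · linarith
      · linarith
      · linarith
      · linarith
    have hlb : b 0 + b 2 ≤ z 0 + z 2 := by
      have main : ∀ u v : Fin 4, u < v → b p + b q = b u + b v → b 0 + b 2 ≤ z 0 + z 2 := by
        intro u v huv hval
        rcases fin4_cases6 u v huv with ⟨rfl, rfl⟩ | ⟨rfl, rfl⟩ | ⟨rfl, rfl⟩ | ⟨rfl, rfl⟩ |
          ⟨rfl, rfl⟩ | ⟨rfl, rfl⟩
        · exfalso; linarith [e3, zs12]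
        · linarith
        · linarith
        · linarith
        · linarith
        · linarith
      rcases lt_or_gt_of_ne hpq with h' | h'
      · exact main p q h' rfl
      · exact main q p h' (by ring)
    linarith
  have e5 : b 0 + b 1 + b 2 + b 3 = z 0 + z 1 + z 2 + z 3 := by linarith
  -- the middle values
  have e6 : b 0 + b 3 = z 0 + z 3 ∨ b 0 + b 3 = z 1 + z 2 := by
    obtain ⟨k, l, hkl, hv⟩ := mem1b 0 3 (by decide)
    rcases fin4_cases6 k l hkl with ⟨rfl, rfl⟩ | ⟨rfl, rfl⟩ | ⟨rfl, rfl⟩ | ⟨rfl, rfl⟩ |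
      ⟨rfl, rfl⟩ | ⟨rfl, rfl⟩
    · exfalso; linarith [e3, hb12, hb23]
    · exfalso; linarith [e4, hb23]
    · exact Or.inl hv
    · exact Or.inr hv
    · exfalso; linarith [e2, hb01]
    · exfalso; linarith [e1, hb01, hb12]
  -- singles matching
  have hsingle : ∀ l : Fin 4, ∃ w : Fin 4 ⊕ Fin 4, z l + e = 2 * El n a w := by
    intro l
    set l' := Fin.castLE (show 4 ≤ 6 by norm_num) l with hl'
    have hl'4 : l' < (4:Fin 6) := fin6_lt4 _ (by have := l.isLt; simp [hl']; omega)
    have htr : (l', (4:Fin 6), (5:Fin 6)) ∈ S6 :=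
      (mem_S6 _).2 ⟨hl'4, show (4:Fin 6) < 5 by decide⟩
    have hcnt1 : ¬ 2 ≤ (ML n m a).count (y l' + y 4 + y 5) := fun hc =>
      absurd (HR _ htr hc).1 (show ¬((4:Fin 6).val ≤ 3) by decide)
    have hmemv : (y l' + y 4 + y 5) ∈ ML n m a := by
      rw [hL]
      exact Multiset.mem_map.2 ⟨(l', (4:Fin 6), (5:Fin 6)), htr, rfl⟩
    have hyt : y l' + y 4 + y 5 = y l' + 2 * t := by rw [← ht, ← h45]; ring
    rcases mem_ML hmemv with ⟨p', hple, hpv⟩ | ⟨p', hple, hpv⟩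
    · rcases lt_or_eq_of_le hple with hp' | hp'
      · exact absurd (by rw [hpv]; exact HA p'.1 p'.2 (ne_of_lt hp')) hcnt1
      · refine ⟨Sum.inl p'.1, ?_⟩
        show z l + e = 2 * a p'.1
        rw [← hp'] at hpv
        rw [hzval, ← hl', he]
        linarith
    · rcases lt_or_eq_of_le hple with hp' | hp'
      · exact absurd (by rw [hpv]; exact HB p'.1 p'.2 (ne_of_lt hp')) hcnt1
      · refine ⟨Sum.inr p'.1, ?_⟩
        show z l + e = 2 * (n - a p'.1)
        rw [← hp'] at hpv
        rw [hzval, ← hl', he]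
        linarith
  -- transfer of the hypotheses to b
  have hmapinj : Function.Injective (Sum.map ⇑σ ⇑σ) :=
    Function.Injective.sumMap σ.injective σ.injective
  have hElb : ∀ w, El n b w = El n a (Sum.map ⇑σ ⇑σ w) := by
    intro w
    rcases w with i | i
    · rfl
    · rfl
  have hNe_b : ∀ w1 w2 : Fin 4 ⊕ Fin 4, w1 ≠ w2 → El n b w1 ≠ El n b w2 := by
    intro w1 w2 h
    rw [hElb, hElb]
    exact hNe _ _ (fun hc => h (hmapinj hc))
  have hAP3_b : ∀ w1 w2 w3 : Fin 4 ⊕ Fin 4, w1 ≠ w2 → w1 ≠ w3 → w2 ≠ w3 →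
      El n b w1 + El n b w2 ≠ 2 * El n b w3 := by
    intro w1 w2 w3 h1 h2 h3
    rw [hElb, hElb, hElb]
    exact hAP3 _ _ _ (fun hc => h1 (hmapinj hc)) (fun hc => h2 (hmapinj hc))
      (fun hc => h3 (hmapinj hc))
  have hz3e : z 3 < e := by
    rw [hz3, he]
    linarith
  -- bridge : every value 2 * El n a w is of the form 2 * El n b w'
  have hsurj : ∀ w : Fin 4 ⊕ Fin 4, ∃ w' : Fin 4 ⊕ Fin 4, El n a w = El n b w' := by
    intro w
    rcases w with i | i
    · refine ⟨Sum.inl (σ.symm i), ?_⟩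
      show a i = a (σ (σ.symm i))
      rw [σ.apply_symm_apply]
    · refine ⟨Sum.inr (σ.symm i), ?_⟩
      show n - a i = n - a (σ (σ.symm i))
      rw [σ.apply_symm_apply]
  rcases e6 with hA | hB
  · -- case A : z = b
    have hzb : ∀ l : Fin 4, z l = b l := by
      intro l
      fin_cases l
      · show z 0 = b 0; linarith
      · show z 1 = b 1; linarith
      · show z 2 = b 2; linarith
      · show z 3 = b 3; linarith
    refine FIN0 b n e hb01 hb12 hb23 hsb (by rw [← hzb 3]; exact hz3e) hNe_b hAP3_b ?_
    intro l
    obtain ⟨w, hw⟩ := hsingle l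
    obtain ⟨w', hw'⟩ := hsurj w
    exact ⟨w', by rw [← hw', ← hzb l]; exact hw⟩
  · -- case B : z is the reflection of b
    have hzrb : z 0 = n - b 3 ∧ z 1 = n - b 2 ∧ z 2 = n - b 1 ∧ z 3 = n - b 0 := by
      refine ⟨by linarith, by linarith, by linarith, by linarith⟩
    set b' : Fin 4 → ℝ := ![n - b 3, n - b 2, n - b 1, n - b 0] with hb'
    have hb'0 : b' 0 = n - b 3 := rfl
    have hb'1 : b' 1 = n - b 2 := rfl
    have hb'2 : b' 2 = n - b 1 := rfl
    have hb'3 : b' 3 = n - b 0 := rfl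
    have hb'z : ∀ l : Fin 4, b' l = z l := by
      intro l
      fin_cases l
      · show b' 0 = z 0; rw [hb'0]; linarith [hzrb.1]
      · show b' 1 = z 1; rw [hb'1]; linarith [hzrb.2.1]
      · show b' 2 = z 2; rw [hb'2]; linarith [hzrb.2.2.1]
      · show b' 3 = z 3; rw [hb'3]; linarith [hzrb.2.2.2]
    -- El for b' in terms of El for b via an explicit bijection
    have hψinj : Function.Injective
        (Sum.elim (fun l => Sum.inr ((![3,2,1,0] : Fin 4 → Fin 4) l))
          (fun l => Sum.inl ((![3,2,1,0] : Fin 4 → Fin 4) l)) : Fin 4 ⊕ Fin 4 → Fin 4 ⊕ Fin 4) := by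
      decide
    have hvalψ : ∀ w : Fin 4 ⊕ Fin 4, El n b' w =
        El n b (Sum.elim (fun l => Sum.inr ((![3,2,1,0] : Fin 4 → Fin 4) l))
          (fun l => Sum.inl ((![3,2,1,0] : Fin 4 → Fin 4) l)) w) := by
      intro w
      rcases w with l | l
      · fin_cases l
        · rfl
        · rfl
        · rfl
        · rfl
      · fin_cases l
        · show n - b' 0 = b 3; rw [hb'0]; ring
        · show n - b' 1 = b 2; rw [hb'1]; ring
        · show n - b' 2 = b 1; rw [hb'2]; ring
        · show n - b' 3 = b 0; rw [hb'3]; ring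
    have hNe_b' : ∀ w1 w2 : Fin 4 ⊕ Fin 4, w1 ≠ w2 → El n b' w1 ≠ El n b' w2 := by
      intro w1 w2 h
      rw [hvalψ, hvalψ]
      exact hNe_b _ _ (fun hc => h (hψinj hc))
    have hAP3_b' : ∀ w1 w2 w3 : Fin 4 ⊕ Fin 4, w1 ≠ w2 → w1 ≠ w3 → w2 ≠ w3 →
        El n b' w1 + El n b' w2 ≠ 2 * El n b' w3 := by
      intro w1 w2 w3 h1 h2 h3
      rw [hvalψ, hvalψ, hvalψ]
      exact hAP3_b _ _ _ (fun hc => h1 (hψinj hc)) (fun hc => h2 (hψinj hc))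
        (fun hc => h3 (hψinj hc))
    have hElb'r : ∀ w : Fin 4 ⊕ Fin 4, ∃ w' : Fin 4 ⊕ Fin 4, El n b w = El n b' w' := by
      intro w
      rcases w with i | i
      · fin_cases i
        · exact ⟨Sum.inr 3, by show b 0 = n - b' 3; rw [hb'3]; ring⟩
        · exact ⟨Sum.inr 2, by show b 1 = n - b' 2; rw [hb'2]; ring⟩
        · exact ⟨Sum.inr 1, by show b 2 = n - b' 1; rw [hb'1]; ring⟩
        · exact ⟨Sum.inr 0, by show b 3 = n - b' 0; rw [hb'0]; ring⟩
      · fin_cases i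
        · exact ⟨Sum.inl 3, by show n - b 0 = b' 3; rw [hb'3]⟩
        · exact ⟨Sum.inl 2, by show n - b 1 = b' 2; rw [hb'2]⟩
        · exact ⟨Sum.inl 1, by show n - b 2 = b' 1; rw [hb'1]⟩
        · exact ⟨Sum.inl 0, by show n - b 3 = b' 0; rw [hb'0]⟩
    have hb'01 : b' 0 < b' 1 := by rw [hb'0, hb'1]; linarith
    have hb'12 : b' 1 < b' 2 := by rw [hb'1, hb'2]; linarith
    have hb'23 : b' 2 < b' 3 := by rw [hb'2, hb'3]; linarith
    have hsb' : b' 0 + b' 1 + b' 2 + b' 3 = 2 * n := by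
      rw [hb'0, hb'1, hb'2, hb'3]; linarith
    refine FIN0 b' n e hb'01 hb'12 hb'23 hsb' (by rw [hb'z 3]; exact hz3e) hNe_b' hAP3_b' ?_
    intro l
    obtain ⟨w, hw⟩ := hsingle l
    obtain ⟨w1, hw1⟩ := hsurj w
    obtain ⟨w2, hw2⟩ := hElb'r w1
    exact ⟨w2, by rw [hb'z l, ← hw2, ← hw1]; exact hw⟩

private lemma bottom (n m : ℝ) (a : Fin 4 → ℝ) (y : Fin 6 → ℝ)
    (hNe : ∀ w1 w2 : Fin 4 ⊕ Fin 4, w1 ≠ w2 → El n a w1 ≠ El n a w2)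
    (hAP3 : ∀ w1 w2 w3 : Fin 4 ⊕ Fin 4, w1 ≠ w2 → w1 ≠ w3 → w2 ≠ w3 →
      El n a w1 + El n a w2 ≠ 2 * El n a w3)
    (hmono : Monotone y) (hL : ML n m a = MR y) (h01 : y 0 = y 1) : False := by
  have hneg : ∀ w, El (-n) (fun i => -a i) w = - El n a w := by
    intro w
    rcases w with i | i
    · rfl
    · show -n - -(a i) = -(n - a i); ring
  have hrev4 : Fin.revPerm (4 : Fin 6) = 1 := by decide
  have hrev5 : Fin.revPerm (5 : Fin 6) = 0 := by decide
  refine top (-n) (-m) (fun i => -a i) (fun i => -y (Fin.revPerm i)) ?_ ?_ ?_ ?_ ?_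
  · intro w1 w2 h
    rw [hneg, hneg]
    exact fun hc => hNe w1 w2 h (by linarith)
  · intro w1 w2 w3 h1 h2 h3
    rw [hneg, hneg, hneg]
    exact fun hc => hAP3 w1 w2 w3 h1 h2 h3 (by linarith)
  · intro i j hij
    have : y (Fin.revPerm j) ≤ y (Fin.revPerm i) := hmono (by
      show j.rev ≤ i.rev
      exact Fin.rev_le_rev.2 hij)
    simp only
    linarith
  · calc ML (-n) (-m) (fun i => -a i) = (ML n m a).map (fun u => -u) := ML_neg n m a
      _ = (MR y).map (fun u => -u) := by rw [hL]
      _ = MR (fun i => -y i) := (MR_neg y).symm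
      _ = MR ((fun i => -y i) ∘ ⇑Fin.revPerm) := (MR_comp_perm _ Fin.revPerm).symm
      _ = MR (fun i => -y (Fin.revPerm i)) := rfl
  · show -y (Fin.revPerm 4) = -y (Fin.revPerm 5)
    rw [hrev4, hrev5, h01]

/-- Main combinatorial lemma: if the eight numbers `a i, n − a i` are pairwise distinct with no
3-term arithmetic progression among them, and the multiset
`{a i + a j + m : i ≤ j} ∪ {2n − (a i + a j) + m : i ≤ j}` equals the multiset
`{x i + x j + x k : i < j < k}`, then `x₁, …, x₆` are pairwise distinct. -/
theorem hodge_tate_distinctness (n m : ℝ) (a : Fin 4 → ℝ) (x : Fin 6 → ℝ)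
    (hdist : Function.Injective (Sum.elim a (fun i => n - a i) : Fin 4 ⊕ Fin 4 → ℝ))
    (hAP : ∀ p ∈ Set.range (Sum.elim a (fun i => n - a i) : Fin 4 ⊕ Fin 4 → ℝ),
      ∀ q ∈ Set.range (Sum.elim a (fun i => n - a i) : Fin 4 ⊕ Fin 4 → ℝ),
      ∀ s ∈ Set.range (Sum.elim a (fun i => n - a i) : Fin 4 ⊕ Fin 4 → ℝ),
      p ≠ q → p ≠ s → q ≠ s → p + q ≠ 2 * s)
    (hmult :
      (Finset.univ.filter fun p : Fin 4 × Fin 4 => p.1 ≤ p.2).val.map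
          (fun p => a p.1 + a p.2 + m)
        + (Finset.univ.filter fun p : Fin 4 × Fin 4 => p.1 ≤ p.2).val.map
          (fun p => 2 * n - (a p.1 + a p.2) + m)
      = (Finset.univ.filter
          fun p : Fin 6 × Fin 6 × Fin 6 => p.1 < p.2.1 ∧ p.2.1 < p.2.2).val.map
          (fun p => x p.1 + x p.2.1 + x p.2.2)) :
    Function.Injective x := by
  classical
  have hNe : ∀ w1 w2 : Fin 4 ⊕ Fin 4, w1 ≠ w2 → El n a w1 ≠ El n a w2 :=
    fun w1 w2 h hc => h (hdist hc)
  have hAP3 : ∀ w1 w2 w3 : Fin 4 ⊕ Fin 4, w1 ≠ w2 → w1 ≠ w3 → w2 ≠ w3 →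
      El n a w1 + El n a w2 ≠ 2 * El n a w3 :=
    fun w1 w2 w3 h1 h2 h3 => hAP _ ⟨w1, rfl⟩ _ ⟨w2, rfl⟩ _ ⟨w3, rfl⟩
      (hNe w1 w2 h1) (hNe w1 w3 h2) (hNe w2 w3 h3)
  have hL0 : ML n m a = MR x := hmult
  set σ6 := Tuple.sort x with hσ6
  set y : Fin 6 → ℝ := x ∘ ⇑σ6 with hy
  have hmono : Monotone y := Tuple.monotone_sort x
  have hL : ML n m a = MR y := hL0.trans (MR_comp_perm x σ6).symm
  have hstrict : StrictMono y := by
    rw [Fin.strictMono_iff_lt_succ]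
    intro i
    refine lt_of_le_of_ne (hmono (le_of_lt (Fin.castSucc_lt_succ (i := i)))) ?_
    fin_cases i
    · show y 0 ≠ y 1
      exact fun h => bottom n m a y hNe hAP3 hmono hL h
    · exact kill12 hNe hAP3 hmono hL
    · exact kill23 hNe hAP3 hmono hL
    · exact kill34 hNe hAP3 hmono hL
    · show y 4 ≠ y 5
      exact fun h => top n m a y hNe hAP3 hmono hL h
  have hyinj : Function.Injective y := hstrict.injective
  intro i j hij
  have hx : ∀ i, x i = y (σ6.symm i) := fun i => by
    show x i = x (σ6 (σ6.symm i))
    rw [σ6.apply_symm_apply]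
  have h2 : σ6.symm i = σ6.symm j := hyinj (by rw [← hx, ← hx]; exact hij)
  exact σ6.symm.injective h2
end

section
/- Let a₁, a₂, a₃, a₄ be real numbers with a₁ + a₂ + a₃ + a₄ = 0, all eight numbers ±a₁, ±a₂, ±a₃, ±a₄ pairwise distinct. Let x₁,…,x₅ be real numbers and suppose there is a bijection f from the set of 2-element subsets of {1,2,3,4} to itself such that x₅ + xᵢ + xⱼ = a_s + a_t whenever f({i,j}) = {s,t}. If two subsets p, q in the domain satisfy p ∩ q ≠ ∅ but f(p) ∩ f(q) = ∅, then two of the numbers x₁, x₂, x₃, x₄ are equal. -/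
/-- If `Σ a = 0`, the eight numbers `±a i` are pairwise distinct, and `f` is a bijection of the
2-element subsets of `{1,2,3,4}` with `x₅ + x i + x j = a s + a t` whenever
`f {i, j} = {s, t}`, then any two subsets with intersecting domains but disjoint images force
two of `x₁, …, x₄` to be equal. -/
theorem bijection_preserves_intersections (a : Fin 4 → ℝ)
    (hsum : a 0 + a 1 + a 2 + a 3 = 0)
    (hdist : Function.Injective (Sum.elim a (fun i => -a i) : Fin 4 ⊕ Fin 4 → ℝ))
    (x : Fin 4 → ℝ) (x₅ : ℝ)
    (f : Finset (Fin 4) → Finset (Fin 4))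
    (hcard : ∀ s : Finset (Fin 4), s.card = 2 → (f s).card = 2)
    (hbij : Set.BijOn f {s : Finset (Fin 4) | s.card = 2} {s : Finset (Fin 4) | s.card = 2})
    (hrel : ∀ i j s t : Fin 4, i ≠ j → s ≠ t →
      f {i, j} = ({s, t} : Finset (Fin 4)) → x₅ + x i + x j = a s + a t)
    (p q : Finset (Fin 4)) (hp : p.card = 2) (hq : q.card = 2)
    (hpq : (p ∩ q).Nonempty) (hfpq : f p ∩ f q = ∅) :
    ∃ i j : Fin 4, i ≠ j ∧ x i = x j := by
  classical
  -- key relation : for any 2-subset, the x-sum equals the a-sum of the image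
  have key : ∀ i j : Fin 4, i ≠ j → x₅ + x i + x j = ∑ t ∈ f {i, j}, a t := by
    intro i j hij
    have hc : ({i, j} : Finset (Fin 4)).card = 2 := Finset.card_pair hij
    obtain ⟨u, v, huv, hfuv⟩ := Finset.card_eq_two.mp (hcard _ hc)
    rw [hfuv, Finset.sum_pair huv]
    exact hrel i j u v hij huv hfuv
  -- the set of 2-subsets as an explicit finset
  set P : Finset (Finset (Fin 4)) :=
    {{0,1},{0,2},{0,3},{1,2},{1,3},{2,3}} with hP
  have hmemP : ∀ s : Finset (Fin 4), s ∈ P ↔ s.card = 2 := by decide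
  -- global sum over all 2-subsets
  have hsum1 : ∑ s ∈ P, (x₅ + ∑ t ∈ s, x t) = ∑ s ∈ P, ∑ t ∈ f s, a t := by
    apply Finset.sum_congr rfl
    intro s hs
    obtain ⟨i, j, hij, rfl⟩ := Finset.card_eq_two.mp ((hmemP s).mp hs)
    rw [Finset.sum_pair hij, ← add_assoc]
    exact key i j hij
  have hsum2 : ∑ s ∈ P, ∑ t ∈ f s, a t = ∑ s ∈ P, ∑ t ∈ s, a t := by
    apply Finset.sum_bij (fun s _ => f s)
    · intro s hs
      exact (hmemP _).mpr (hbij.mapsTo ((hmemP s).mp hs))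
    · intro s hs t ht h
      exact hbij.injOn ((hmemP s).mp hs) ((hmemP t).mp ht) h
    · intro b hb
      obtain ⟨s, hs, hfs⟩ := hbij.surjOn ((hmemP b).mp hb)
      exact ⟨s, (hmemP s).mpr hs, hfs⟩
    · intro s hs; rfl
  have hPa : ∑ s ∈ P, ∑ t ∈ s, a t = 0 := by
    simp +decide [hP, Finset.sum_insert, Finset.sum_pair]
    linarith
  have hPx : ∑ s ∈ P, (x₅ + ∑ t ∈ s, x t)
      = 6 * x₅ + 3 * (x 0 + x 1 + x 2 + x 3) := by
    simp +decide [hP, Finset.sum_insert, Finset.sum_pair]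
    ring
  have hglobal : 6 * x₅ + 3 * (x 0 + x 1 + x 2 + x 3) = 0 := by
    rw [← hPx, hsum1, hsum2, hPa]
  -- local analysis of p and q
  have pairof : ∀ (s : Finset (Fin 4)), s.card = 2 → ∀ i ∈ s, ∃ j, i ≠ j ∧ s = {i, j} := by
    intro s hs i his
    obtain ⟨u, v, huv, rfl⟩ := Finset.card_eq_two.mp hs
    rcases Finset.mem_insert.mp his with rfl | h
    · exact ⟨v, huv, rfl⟩
    · rw [Finset.mem_singleton] at h
      subst h
      exact ⟨u, huv.symm, Finset.pair_comm u i⟩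
  obtain ⟨i, hi⟩ := hpq
  rw [Finset.mem_inter] at hi
  obtain ⟨j, hij, hpij⟩ := pairof p hp i hi.1
  obtain ⟨k, hik, hqik⟩ := pairof q hq i hi.2
  subst hpij
  subst hqik
  have hjk : j ≠ k := by
    rintro rfl
    rw [Finset.inter_self] at hfpq
    have := hcard _ hp
    rw [hfpq] at this
    simp at this
  have hdisj : Disjoint (f {i, j}) (f {i, k}) := Finset.disjoint_iff_inter_eq_empty.mpr hfpq
  have huni : f {i, j} ∪ f {i, k} = Finset.univ := by
    apply Finset.eq_univ_of_card
    rw [Finset.card_union_of_disjoint hdisj, hcard _ hp, hcard _ hq]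
    rfl
  have hlocal : (x₅ + x i + x j) + (x₅ + x i + x k) = 0 := by
    rw [key i j hij, key i k hik, ← Finset.sum_union hdisj, huni, Fin.sum_univ_four]
    exact hsum
  -- find the fourth index
  have hex : ∀ i j k : Fin 4, ∃ l : Fin 4, l ≠ i ∧ l ≠ j ∧ l ≠ k := by decide
  obtain ⟨l, hli, hlj, hlk⟩ := hex i j k
  have huniv4 : (Finset.univ : Finset (Fin 4)) = {i, j, k, l} := by
    symm
    apply Finset.eq_univ_of_card
    rw [Finset.card_insert_of_notMem (by simp [hij, hik, hli.symm]),
      Finset.card_insert_of_notMem (by simp [hjk, hlj.symm]),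
      Finset.card_insert_of_notMem (by simp [hlk.symm]),
      Finset.card_singleton]
    rfl
  have hsx : x 0 + x 1 + x 2 + x 3 = x i + x j + x k + x l := by
    have h1 : x 0 + x 1 + x 2 + x 3 = ∑ t ∈ (Finset.univ : Finset (Fin 4)), x t :=
      (Fin.sum_univ_four x).symm
    rw [h1, huniv4, Finset.sum_insert (by simp [hij, hik, hli.symm]),
      Finset.sum_insert (by simp [hjk, hlj.symm]),
      Finset.sum_insert (by simp [hlk.symm]), Finset.sum_singleton]
    ring
  exact ⟨i, l, hli.symm, by linarith⟩
end
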